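/- arXiv:2101.11973 — 6 statements merged into one kernel-verified Lean document; each statement's English description precedes it below -/
import Mathlib

section
/- There exists a constant K > 0 such that for every integer c ≥ 5, every real number r ≥ 10c, and every function x : cΓ → 𝒟, the finite sum S = Σ_{μ ∈ cΓ, r/2 ≤ |μ| ≤ r} 1/(μ + x(μ)) satisfies |S| ≤ K/c². -/
set_option maxHeartbeats 1000000

open Complex

/-- The Gaussian lattice `Γ = ℤ ⊕ ℤ√-1` in `ℂ`. -/
def gaussianLattice : Set ℂ := {z : ℂ | ∃ a b : ℤ, z = (a : ℂ) + (b : ℂ) * Complex.I}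

/-- The scaled lattice `cΓ = {cγ : γ ∈ Γ}`. -/
def scaledLattice (c : ℕ) : Set ℂ := {z : ℂ | ∃ γ ∈ gaussianLattice, z = (c : ℂ) * γ}

/-- The fundamental domain `𝒟 = {x + y√-1 : 0 ≤ x, y < 1}`. -/
def fundDomain : Set ℂ := {z : ℂ | 0 ≤ z.re ∧ z.re < 1 ∧ 0 ≤ z.im ∧ z.im < 1}

theorem stmt_0 :
    ∃ K : ℝ, 0 < K ∧
      ∀ c : ℕ, 5 ≤ c →
      ∀ r : ℝ, 10 * (c : ℝ) ≤ r →
      ∀ x : ℂ → ℂ, (∀ μ, x μ ∈ fundDomain) →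
        Set.Finite {μ : ℂ | μ ∈ scaledLattice c ∧ r / 2 ≤ ‖μ‖ ∧ ‖μ‖ ≤ r} ∧
        ‖
          (∑ᶠ μ ∈ {μ : ℂ | μ ∈ scaledLattice c ∧ r / 2 ≤ ‖μ‖ ∧ ‖μ‖ ≤ r},
            (μ + x μ)⁻¹)‖ ≤ K / (c : ℝ) ^ 2 := by
  classical
  refine ⟨100, by norm_num, ?_⟩
  intro c hc r hr x hx
  have hc0 : (0:ℝ) < (c:ℝ) := by
    have : (5:ℝ) ≤ (c:ℝ) := by exact_mod_cast hc
    linarith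
  have hc5 : (5:ℝ) ≤ (c:ℝ) := by exact_mod_cast hc
  have hr50 : (50:ℝ) ≤ r := by nlinarith
  set n : ℤ := ⌊r / (c:ℝ)⌋ with hn_def
  have hq10 : (10:ℝ) ≤ r / (c:ℝ) := by
    rw [le_div_iff₀ hc0]; linarith
  have hn10 : (10:ℤ) ≤ n := Int.le_floor.mpr (by push_cast; linarith)
  have hnq : (n:ℝ) ≤ r / (c:ℝ) := Int.floor_le _
  have hn10' : (10:ℝ) ≤ (n:ℝ) := by exact_mod_cast hn10
  -- the lattice map
  set M : ℤ × ℤ → ℂ := fun p => (c:ℂ) * ((p.1:ℂ) + (p.2:ℂ) * Complex.I) with hM_def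
  have hMre : ∀ p : ℤ × ℤ, (M p).re = (c:ℝ) * (p.1:ℝ) := by
    intro p; simp [hM_def]
  have hMim : ∀ p : ℤ × ℤ, (M p).im = (c:ℝ) * (p.2:ℝ) := by
    intro p; simp [hM_def]
  set T : Finset (ℤ × ℤ) :=
    (Finset.Icc (-n) n ×ˢ Finset.Icc (-n) n).filter
      (fun p => r / 2 ≤ ‖M p‖ ∧ ‖M p‖ ≤ r) with hT_def
  set F : Finset ℂ := T.image M with hF_def
  -- membership characterization
  have hA : {μ : ℂ | μ ∈ scaledLattice c ∧ r / 2 ≤ ‖μ‖ ∧ ‖μ‖ ≤ r} = ↑F := by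
    ext μ
    rw [Set.mem_setOf_eq, Finset.mem_coe, hF_def, Finset.mem_image]
    constructor
    · rintro ⟨⟨γ, ⟨a, b, rfl⟩, rfl⟩, h1, h2⟩
      have habs_a : (c:ℝ) * |(a:ℝ)| ≤ r := by
        have := Complex.abs_re_le_norm (M (a, b))
        rw [hMre (a, b)] at this
        calc (c:ℝ) * |(a:ℝ)| = |(c:ℝ) * (a:ℝ)| := by
              rw [abs_mul, abs_of_pos hc0]
          _ ≤ ‖M (a, b)‖ := this
          _ ≤ r := h2
      have habs_b : (c:ℝ) * |(b:ℝ)| ≤ r := by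
        have := Complex.abs_im_le_norm (M (a, b))
        rw [hMim (a, b)] at this
        calc (c:ℝ) * |(b:ℝ)| = |(c:ℝ) * (b:ℝ)| := by
              rw [abs_mul, abs_of_pos hc0]
          _ ≤ ‖M (a, b)‖ := this
          _ ≤ r := h2
      have ha' : |a| ≤ n := by
        rw [Int.le_floor]
        push_cast
        rw [le_div_iff₀ hc0]
        calc |(a:ℝ)| * (c:ℝ) = (c:ℝ) * |(a:ℝ)| := by ring
          _ ≤ r := habs_a
      have hb' : |b| ≤ n := by
        rw [Int.le_floor]
        push_cast
        rw [le_div_iff₀ hc0]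
        calc |(b:ℝ)| * (c:ℝ) = (c:ℝ) * |(b:ℝ)| := by ring
          _ ≤ r := habs_b
      obtain ⟨ha1, ha2⟩ := abs_le.mp ha'
      obtain ⟨hb1, hb2⟩ := abs_le.mp hb'
      refine ⟨(a, b), ?_, rfl⟩
      rw [hT_def, Finset.mem_filter, Finset.mem_product, Finset.mem_Icc, Finset.mem_Icc]
      exact ⟨⟨⟨ha1, ha2⟩, ⟨hb1, hb2⟩⟩, h1, h2⟩
    · rintro ⟨⟨a, b⟩, hab, rfl⟩
      rw [hT_def, Finset.mem_filter] at hab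
      exact ⟨⟨(a:ℂ) + (b:ℂ) * Complex.I, ⟨a, b, rfl⟩, rfl⟩, hab.2⟩
  refine ⟨hA ▸ F.finite_toSet, ?_⟩
  rw [hA, finsum_mem_coe_finset]
  -- basic facts about members of F
  have hFmem : ∀ μ ∈ F, r / 2 ≤ ‖μ‖ ∧ ‖μ‖ ≤ r := by
    intro μ hμ
    have : μ ∈ ({μ : ℂ | μ ∈ scaledLattice c ∧ r / 2 ≤ ‖μ‖ ∧ ‖μ‖ ≤ r}) := by
      rw [hA]; exact_mod_cast hμ
    exact this.2
  have hFneg : ∀ μ ∈ F, -μ ∈ F := by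
    intro μ hμ
    have h1 : μ ∈ ({μ : ℂ | μ ∈ scaledLattice c ∧ r / 2 ≤ ‖μ‖ ∧ ‖μ‖ ≤ r}) := by
      rw [hA]; exact_mod_cast hμ
    obtain ⟨⟨γ, ⟨a, b, hab⟩, hγ⟩, h2, h3⟩ := h1
    have : -μ ∈ ({μ : ℂ | μ ∈ scaledLattice c ∧ r / 2 ≤ ‖μ‖ ∧ ‖μ‖ ≤ r}) := by
      refine ⟨⟨((-a:ℤ):ℂ) + ((-b:ℤ):ℂ) * Complex.I, ⟨-a, -b, rfl⟩, by
        rw [hγ, hab]; push_cast; ring⟩, ?_, ?_⟩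
      · rw [norm_neg]; exact h2
      · rw [norm_neg]; exact h3
    rw [hA] at this
    exact_mod_cast this
  -- the symmetric sum of 1/μ vanishes
  have hzero : ∑ μ ∈ F, μ⁻¹ = 0 := by
    refine Finset.sum_involution (fun μ _ => -μ) ?_ ?_ (fun μ hμ => hFneg μ hμ) ?_
    · intro μ hμ
      rcases eq_or_ne μ 0 with h | h
      · simp [h]
      · rw [inv_neg]; ring
    · intro μ hμ hne
      have hμ0 : μ ≠ 0 := by
        intro h; apply hne; simp [h]
      intro h
      exact hμ0 (by linear_combination (h : -μ = μ) / (-2))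
    · intro μ hμ; simp
  -- rewrite the sum as a sum of differences
  have hsum : ∑ μ ∈ F, (μ + x μ)⁻¹ = ∑ μ ∈ F, ((μ + x μ)⁻¹ - μ⁻¹) := by
    rw [Finset.sum_sub_distrib, hzero, sub_zero]
  rw [hsum]
  -- bound each term
  have hx2 : ∀ μ : ℂ, ‖x μ‖ ≤ 2 := by
    intro μ
    obtain ⟨h1, h2, h3, h4⟩ := hx μ
    calc ‖x μ‖ ≤ |(x μ).re| + |(x μ).im| := Complex.norm_le_abs_re_add_abs_im _
      _ ≤ 1 + 1 := by
          gcongr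
          · rw [_root_.abs_of_nonneg h1]; linarith
          · rw [_root_.abs_of_nonneg h3]; linarith
      _ = 2 := by norm_num
  have hterm : ∀ μ ∈ F, ‖(μ + x μ)⁻¹ - μ⁻¹‖ ≤ 9 / r ^ 2 := by
    intro μ hμ
    obtain ⟨h1, h2⟩ := hFmem μ hμ
    have habsμ : (23:ℝ) ≤ ‖μ‖ := by linarith
    have hμ0 : μ ≠ 0 := by
      intro h
      rw [h, norm_zero] at habsμ
      linarith
    have habsμx : r / 2 - 2 ≤ ‖μ + x μ‖ := by
      have key : ‖μ‖ ≤ ‖μ + x μ‖ + ‖x μ‖ := by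
        calc ‖μ‖ = ‖(μ + x μ) + (-(x μ))‖ := by congr 1; ring
          _ ≤ ‖μ + x μ‖ + ‖-(x μ)‖ := norm_add_le _ _
          _ = ‖μ + x μ‖ + ‖x μ‖ := by rw [norm_neg]
      have := hx2 μ
      linarith
    have hpos : (0:ℝ) < r / 2 - 2 := by linarith
    have hμx0 : μ + x μ ≠ 0 := by
      intro h
      rw [h, norm_zero] at habsμx
      linarith
    have heq : (μ + x μ)⁻¹ - μ⁻¹ = -(x μ) * ((μ + x μ) * μ)⁻¹ := by
      field_simp
      ring
    rw [heq]
    rw [norm_mul, norm_inv, norm_mul, norm_neg]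
    have hden : (r / 2 - 2) * (r / 2) ≤ ‖μ + x μ‖ * ‖μ‖ := by
      have h0 : (0:ℝ) ≤ r / 2 := by linarith
      exact mul_le_mul habsμx h1 h0 (norm_nonneg _)
    have hdenpos : (0:ℝ) < (r / 2 - 2) * (r / 2) := by positivity
    calc ‖x μ‖ * (‖μ + x μ‖ * ‖μ‖)⁻¹
        ≤ 2 * ((r / 2 - 2) * (r / 2))⁻¹ := by
          apply mul_le_mul (hx2 μ) _ (by positivity) (by norm_num)
          exact inv_anti₀ hdenpos hden
      _ = 2 / ((r / 2 - 2) * (r / 2)) := by rw [div_eq_mul_inv 2 ((r / 2 - 2) * (r / 2))]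
      _ ≤ 9 / r ^ 2 := by
          rw [div_le_div_iff₀ hdenpos (by positivity)]
          nlinarith
  -- bound the cardinality
  have hcard : (F.card : ℝ) ≤ (2 * (n:ℝ) + 1) ^ 2 := by
    have h1 : F.card ≤ T.card := Finset.card_image_le
    have h2 : T.card ≤ ((Finset.Icc (-n) n) ×ˢ (Finset.Icc (-n) n)).card :=
      Finset.card_filter_le _ _
    have h3 : ((Finset.Icc (-n) n) ×ˢ (Finset.Icc (-n) n)).card
        = (Finset.Icc (-n) n).card * (Finset.Icc (-n) n).card := Finset.card_product _ _
    have hIccZ : ((Finset.Icc (-n) n).card : ℤ) = 2 * n + 1 := by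
      rw [Int.card_Icc]
      omega
    have hIcc : ((Finset.Icc (-n) n).card : ℝ) = 2 * (n:ℝ) + 1 := by
      exact_mod_cast hIccZ
    have hle : (F.card : ℝ) ≤ ((Finset.Icc (-n) n).card : ℝ) * ((Finset.Icc (-n) n).card : ℝ) := by
      exact_mod_cast le_trans h1 (le_trans h2 (le_of_eq h3))
    rw [hIcc] at hle
    nlinarith
  calc ‖∑ μ ∈ F, ((μ + x μ)⁻¹ - μ⁻¹)‖
      ≤ ∑ μ ∈ F, ‖(μ + x μ)⁻¹ - μ⁻¹‖ := norm_sum_le _ _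
    _ ≤ F.card • (9 / r ^ 2) := Finset.sum_le_card_nsmul _ _ _ hterm
    _ = (F.card : ℝ) * (9 / r ^ 2) := by rw [nsmul_eq_mul]
    _ ≤ ((21 / 10) * (r / (c:ℝ))) ^ 2 * (9 / r ^ 2) := by
        apply mul_le_mul_of_nonneg_right _ (by positivity)
        calc (F.card : ℝ) ≤ (2 * (n:ℝ) + 1) ^ 2 := hcard
          _ ≤ ((21 / 10) * (r / (c:ℝ))) ^ 2 := by
              apply pow_le_pow_left₀ (by linarith)
              nlinarith
    _ ≤ 100 / (c:ℝ) ^ 2 := by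
        have hr0 : (0:ℝ) < r := by linarith
        have heq2 : ((21 / 10) * (r / (c:ℝ))) ^ 2 * (9 / r ^ 2)
            = (441 / 100 * 9) / (c:ℝ) ^ 2 := by
          field_simp
          ring
        rw [heq2, div_le_div_iff₀ (by positivity) (by positivity)]
        nlinarith [pow_pos hc0 2]
end

section
/- There exists a constant K > 0 such that for every integer c ≥ 5, every real number r ≥ 10c, and every function x : cΓ → 𝒟, the finite sum S = Σ_{μ ∈ cΓ, r/2 ≤ |μ| ≤ r} 1/(μ + x(μ))² satisfies |S| ≤ K/(c² r). -/
open Complex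

lemma aux_term_bound (r : ℝ) (hr50 : (50:ℝ) ≤ r) (μ w : ℂ)
    (h1 : r / 2 ≤ ‖μ‖) (hwabs : ‖w‖ ≤ 2)
    (h2 : ‖μ‖ ≤ r) :
    ‖((μ + w) ^ 2)⁻¹ - (μ ^ 2)⁻¹‖ ≤ 125 / r ^ 3 := by
  have hrpos : (0:ℝ) < r := by linarith
  have hμw : 2*r/5 ≤ ‖μ + w‖ := by
    have h3 : ‖μ‖ - ‖w‖ ≤ ‖μ + w‖ := by
      have := norm_add_le (μ + w) (-w)
      simp only [add_neg_cancel_right, norm_neg] at this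
      linarith
    linarith
  have hμpos : (0:ℝ) < ‖μ‖ := by linarith
  have hμwpos : (0:ℝ) < ‖μ + w‖ := by linarith
  have hne1 : μ + w ≠ 0 := fun h => by simp [h] at hμwpos
  have hne2 : μ ≠ 0 := fun h => by simp [h] at hμpos
  have hkey : ((μ + w)^2)⁻¹ - (μ^2)⁻¹ = (-(w*(2*μ+w))) / ((μ+w)^2 * μ^2) := by
    field_simp
    ring
  rw [hkey, norm_div, norm_neg, norm_mul, norm_mul, norm_pow, norm_pow]
  have hnum : ‖w‖ * ‖2*μ+w‖ ≤ 5 * r := by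
    have h4 : ‖2*μ+w‖ ≤ 2*r + 2 := by
      have := norm_add_le (2*μ) w
      rw [norm_mul] at this
      simp only [Complex.norm_two] at this
      nlinarith [norm_nonneg w]
    nlinarith [norm_nonneg w, norm_nonneg (2*μ+w)]
  have hden : r^4 / 25 ≤ ‖μ+w‖^2 * ‖μ‖^2 := by
    have e1 : (2*r/5)^2 ≤ ‖μ+w‖^2 := by nlinarith
    have e2 : (r/2)^2 ≤ ‖μ‖^2 := by nlinarith
    nlinarith
  have hdenpos : (0:ℝ) < r^4/25 := by positivity
  calc ‖w‖ * ‖2*μ+w‖ / (‖μ+w‖^2 * ‖μ‖^2)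
      ≤ (5*r) / (r^4/25) := div_le_div₀ (by positivity) hnum hdenpos hden
    _ = 125 / r^3 := by field_simp; ring

theorem stmt_1 :
    ∃ K : ℝ, 0 < K ∧
      ∀ c : ℕ, 5 ≤ c →
      ∀ r : ℝ, 10 * (c : ℝ) ≤ r →
      ∀ x : ℂ → ℂ, (∀ μ, x μ ∈ fundDomain) →
        Set.Finite {μ : ℂ | μ ∈ scaledLattice c ∧ r / 2 ≤ ‖μ‖ ∧ ‖μ‖ ≤ r} ∧
        ‖(∑ᶠ μ ∈ {μ : ℂ | μ ∈ scaledLattice c ∧ r / 2 ≤ ‖μ‖ ∧ ‖μ‖ ≤ r},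
            ((μ + x μ) ^ 2)⁻¹)‖ ≤ K / ((c : ℝ) ^ 2 * r) := by
  refine ⟨625, by norm_num, ?_⟩
  intro c hc r hr x hx
  set A : Set ℂ := {μ : ℂ | μ ∈ scaledLattice c ∧ r / 2 ≤ ‖μ‖ ∧ ‖μ‖ ≤ r}
    with hAdef
  have hcR : (5:ℝ) ≤ (c:ℝ) := by exact_mod_cast hc
  have hcpos : (0:ℝ) < (c:ℝ) := by linarith
  have hr50 : (50:ℝ) ≤ r := by linarith
  have hrpos : (0:ℝ) < r := by linarith
  have ht10 : (10:ℝ) ≤ r / c := (le_div_iff₀ hcpos).2 (by linarith)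
  -- the grid
  set N : ℤ := ⌊r / (c:ℝ)⌋ with hN
  have hN0 : (0:ℤ) ≤ N := Int.le_floor.2 (by push_cast; linarith)
  have hNle : (N:ℝ) ≤ r / c := Int.floor_le _
  set B : Finset (ℤ × ℤ) := Finset.Icc (-N) N ×ˢ Finset.Icc (-N) N with hB
  set f : ℤ × ℤ → ℂ := fun p => (c:ℂ) * ((p.1:ℂ) + (p.2:ℂ) * Complex.I) with hf
  have hsub : A ⊆ f '' ↑B := by
    rintro μ ⟨⟨γ, ⟨a, b, rfl⟩, rfl⟩, h1, h2⟩
    refine ⟨(a, b), ?_, rfl⟩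
    have hre : ((c:ℂ) * ((a:ℂ) + (b:ℂ) * Complex.I)).re = (c:ℝ) * (a:ℝ) := by
      simp
    have him : ((c:ℂ) * ((a:ℂ) + (b:ℂ) * Complex.I)).im = (c:ℝ) * (b:ℝ) := by
      simp
    have hra : |(c:ℝ) * (a:ℝ)| ≤ r := by
      rw [← hre]
      exact (Complex.abs_re_le_norm _).trans h2
    have hrb : |(c:ℝ) * (b:ℝ)| ≤ r := by
      rw [← him]
      exact (Complex.abs_im_le_norm _).trans h2
    have ha' : |(a:ℝ)| ≤ r / c := by
      rw [abs_mul, abs_of_pos hcpos] at hra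
      rw [le_div_iff₀ hcpos]; linarith
    have hb' : |(b:ℝ)| ≤ r / c := by
      rw [abs_mul, abs_of_pos hcpos] at hrb
      rw [le_div_iff₀ hcpos]; linarith
    rw [abs_le] at ha' hb'
    simp only [hB, Finset.coe_product, Set.mem_prod, Finset.mem_coe, Finset.mem_Icc]
    constructor
    · constructor
      · have : -(r/c) ≤ (a:ℝ) := ha'.1
        have h := Int.le_floor.2 (show ((-a : ℤ):ℝ) ≤ r / c by push_cast; linarith)
        omega
      · exact Int.le_floor.2 ha'.2
    · constructor
      · have h := Int.le_floor.2 (show ((-b : ℤ):ℝ) ≤ r / c by push_cast; linarith)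
        omega
      · exact Int.le_floor.2 hb'.2
  have hfin : A.Finite := (B.finite_toSet.image f).subset hsub
  refine ⟨hfin, ?_⟩
  set s := hfin.toFinset with hs
  have hmem : ∀ μ, μ ∈ s ↔ μ ∈ A := fun μ => hfin.mem_toFinset
  -- cardinality bound
  have hcard : (s.card : ℝ) ≤ 5 * (r/c)^2 := by
    have h1 : s ⊆ B.image f := by
      intro μ hμ
      rcases hsub ((hmem μ).1 hμ) with ⟨p, hp, rfl⟩
      exact Finset.mem_image.2 ⟨p, hp, rfl⟩
    have h2 : s.card ≤ B.card := (Finset.card_le_card h1).trans Finset.card_image_le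
    have h3 : B.card = ((2*N+1).toNat) * ((2*N+1).toNat) := by
      rw [hB, Finset.card_product, Int.card_Icc]
      congr 1 <;> congr 1 <;> ring
    have h4 : (((2*N+1).toNat : ℕ) : ℝ) = 2*(N:ℝ)+1 := by
      have h := Int.toNat_of_nonneg (show (0:ℤ) ≤ 2*N+1 by omega)
      have h' : (((2*N+1).toNat : ℤ) : ℝ) = ((2*N+1 : ℤ) : ℝ) := by exact_mod_cast h
      push_cast at h'
      linarith
    have h5 : (B.card : ℝ) = (2*(N:ℝ)+1) * (2*(N:ℝ)+1) := by
      rw [h3]; push_cast [h4]; ring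
    have h6 : (s.card : ℝ) ≤ (2*(N:ℝ)+1) * (2*(N:ℝ)+1) := by
      rw [← h5]; exact_mod_cast h2
    have hNr : (N:ℝ) ≤ r/c := hNle
    nlinarith [ht10, hNr, h6, (by exact_mod_cast hN0 : (0:ℝ) ≤ (N:ℝ))]
  -- symmetry: s is closed under multiplication by I
  have hsym : ∀ μ ∈ s, Complex.I * μ ∈ s := by
    intro μ hμ
    rw [hmem] at hμ ⊢
    obtain ⟨⟨γ, ⟨a, b, rfl⟩, rfl⟩, h1, h2⟩ := hμ
    refine ⟨⟨Complex.I * ((a:ℂ) + (b:ℂ) * Complex.I), ⟨-b, a, ?_⟩, by ring⟩, ?_, ?_⟩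
    · push_cast
      have : Complex.I * Complex.I = -1 := Complex.I_mul_I
      linear_combination ((b:ℂ)) * this
    · simpa [norm_mul, ← mul_assoc] using h1
    · simpa [norm_mul, ← mul_assoc] using h2
  have hI4 : ∀ μ : ℂ, Complex.I * (Complex.I * (Complex.I * (Complex.I * μ))) = μ := by
    intro μ
    have : Complex.I * Complex.I = -1 := Complex.I_mul_I
    linear_combination (Complex.I * Complex.I * μ - μ) * this
  -- the unperturbed sum vanishes
  have hzero : ∑ μ ∈ s, ((μ:ℂ)^2)⁻¹ = 0 := by
    have h : ∑ μ ∈ s, ((μ:ℂ)^2)⁻¹ = ∑ μ ∈ s, -((μ:ℂ)^2)⁻¹ := by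
      refine Finset.sum_nbij' (fun μ => Complex.I * μ)
        (fun μ => Complex.I * (Complex.I * (Complex.I * μ))) hsym
        (fun μ hμ => hsym _ (hsym _ (hsym _ hμ))) (fun μ _ => hI4 μ) (fun μ _ => hI4 μ) ?_
      intro μ _
      have h2 : (Complex.I * μ)^2 = -(μ^2) := by
        have : Complex.I * Complex.I = -1 := Complex.I_mul_I
        linear_combination (μ^2) * this
      rw [h2, inv_neg, neg_neg]
    rw [Finset.sum_neg_distrib] at h
    have h2 : ∑ μ ∈ s, ((μ:ℂ)^2)⁻¹ + ∑ μ ∈ s, ((μ:ℂ)^2)⁻¹ = 0 := by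
      nth_rewrite 2 [h]; ring
    exact add_self_eq_zero.mp h2
  -- rewrite finsum as finset sum
  rw [← hfin.coe_toFinset, finsum_mem_coe_finset]
  -- split the sum
  have hsplit : ∑ μ ∈ s, ((μ + x μ)^2)⁻¹
      = ∑ μ ∈ s, (((μ + x μ)^2)⁻¹ - ((μ:ℂ)^2)⁻¹) := by
    rw [Finset.sum_sub_distrib, hzero, sub_zero]
  rw [hsplit]
  -- per-term bound
  have hterm : ∀ μ ∈ s, ‖((μ + x μ)^2)⁻¹ - ((μ:ℂ)^2)⁻¹‖ ≤ 125 / r^3 := by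
    intro μ hμ
    obtain ⟨-, h1, h2⟩ := (hmem μ).1 hμ
    obtain ⟨a1, a2, a3, a4⟩ := hx μ
    have hwabs : ‖x μ‖ ≤ 2 := by
      refine (Complex.norm_le_abs_re_add_abs_im (x μ)).trans ?_
      rw [_root_.abs_of_nonneg a1, _root_.abs_of_nonneg a3]; linarith
    exact aux_term_bound r hr50 μ (x μ) h1 hwabs h2
  -- assemble
  calc ‖∑ μ ∈ s, (((μ + x μ)^2)⁻¹ - ((μ:ℂ)^2)⁻¹)‖
      ≤ ∑ μ ∈ s, ‖((μ + x μ)^2)⁻¹ - ((μ:ℂ)^2)⁻¹‖ :=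
        norm_sum_le _ _
    _ ≤ ∑ _μ ∈ s, (125 / r^3) := Finset.sum_le_sum hterm
    _ = (s.card : ℝ) * (125 / r^3) := by rw [Finset.sum_const, nsmul_eq_mul]
    _ ≤ (5 * (r/c)^2) * (125 / r^3) := by
        apply mul_le_mul_of_nonneg_right hcard (by positivity)
    _ = 625 / ((c:ℝ)^2 * r) := by field_simp; ring
end

section
/- There exists a constant K > 0 with the following property. For every integer c ≥ 5, every sequence of radii (r_i)_{i≥1} with r₁ ≥ 2020c and r_{i+1} ≥ r_i⁴ for all i ≥ 1, and every function x : M → 𝒟 (where M = ⋃_{i≥1} (A_{r_i} ∩ cΓ) and λ_μ = μ + x(μ)), the family of factors (1 - z/λ_μ)·exp(z/λ_μ + z²/(2λ_μ²)), μ ∈ M, is multipliable for every z ∈ ℂ, and its product ψ(z) satisfies log|ψ(z)| ≤ K r_i²/c² for every i ≥ 2 and every z with r_i/3 ≤ |z| ≤ 3 r_i. -/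
open Complex

/-- The union of annular pieces of the scaled lattice:
`M = ⋃_{i ≥ 1} (A_{r_i} ∩ cΓ)` where `A_r = {z : r/2 ≤ |z| ≤ r}`. -/
def annuliLattice (c : ℕ) (r : ℕ → ℝ) : Set ℂ :=
  {μ : ℂ | ∃ i : ℕ, 1 ≤ i ∧ μ ∈ scaledLattice c ∧
    r i / 2 ≤ ‖μ‖ ∧ ‖μ‖ ≤ r i}

/-- The Weierstrass factor of genus 2 with zero `lam`:
`(1 - z/lam) · exp(z/lam + z²/(2 lam²))`. -/
noncomputable def wFactor (z lam : ℂ) : ℂ :=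
  (1 - z / lam) * Complex.exp (z / lam + z ^ 2 / (2 * lam ^ 2))

/-- compatibility: the complex absolute value as a bundled absolute value -/
noncomputable def Complex.abs : AbsoluteValue ℂ ℝ :=
  IsAbsoluteValue.toAbsoluteValue (norm : ℂ → ℝ)

lemma Complex.norm_eq_abs (z : ℂ) : ‖z‖ = Complex.abs z := rfl

lemma Complex.abs_I : Complex.abs Complex.I = 1 := Complex.norm_I

lemma Complex.abs_two : Complex.abs 2 = 2 := by
  rw [← Complex.norm_eq_abs]; norm_num

namespace Stmt6Aux




/-- cubic log bound -/
lemma logb3 {w : ℂ} (hw : Complex.abs w ≤ 1/2) :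
    Complex.abs (Complex.log (1 - w) + (w + w^2/2)) ≤ (Complex.abs w)^3 := by
  have h1 : ‖(-w)‖ < 1 := by
    rw [norm_neg]; simpa [Complex.norm_eq_abs] using lt_of_le_of_lt hw (by norm_num)
  have h := Complex.norm_log_sub_logTaylor_le 2 h1
  have hlt : Complex.logTaylor 3 (-w) = -w - w^2/2 := by
    simp [Complex.logTaylor_succ, Complex.logTaylor_zero]
    ring
  rw [hlt] at h
  have he : Complex.log (1 + -w) - (-w - w^2/2) = Complex.log (1 - w) + (w + w^2/2) := by
    rw [sub_eq_add_neg 1 w]; ring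
  rw [he] at h
  have hn : ‖(-w)‖ = Complex.abs w := by rw [norm_neg]; rfl
  rw [hn] at h
  refine h.trans ?_
  have hw0 : (0:ℝ) ≤ Complex.abs w := Complex.abs.nonneg w
  have h2 : (1 - Complex.abs w)⁻¹ ≤ 2 := by
    rw [inv_le_comm₀ (by linarith) (by norm_num)]
    linarith
  have hinv : (0:ℝ) ≤ (1 - Complex.abs w)⁻¹ := inv_nonneg.2 (by linarith)
  have h3 : Complex.abs w ^ (2+1) = Complex.abs w ^ 3 := by norm_num
  rw [h3]
  nlinarith [pow_nonneg hw0 3]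

/-- linear real-part bound -/
lemma re_le_lin (w : ℂ) : (Complex.log (1 - w) + w).re ≤ 2 * Complex.abs w := by
  have hre : (Complex.log (1-w)).re = Real.log (Complex.abs (1-w)) := Complex.log_re _
  have h2 : w.re ≤ Complex.abs w := Complex.re_le_norm w
  have h3 : Real.log (Complex.abs (1-w)) ≤ Complex.abs w := by
    rcases le_or_gt (Complex.abs (1-w)) 1 with h | h
    · exact (Real.log_nonpos (Complex.abs.nonneg _) h).trans (Complex.abs.nonneg w)
    · have := Real.log_le_sub_one_of_pos (lt_trans one_pos h)
      have habs : Complex.abs (1-w) ≤ 1 + Complex.abs w := by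
        have := Complex.abs.add_le 1 (-w)
        rwa [← sub_eq_add_neg, map_neg_eq_map, map_one] at this
      linarith
  simp only [Complex.add_re, hre]
  linarith

lemma hasProd_zero_of_exists_eq_zero {ι : Type*} {f : ι → ℂ} (h : ∃ i, f i = 0) :
    HasProd f 0 := by
  obtain ⟨i0, h0⟩ := h
  have hev : ∀ᶠ s : Finset ι in Filter.atTop, (0:ℂ) = ∏ i ∈ s, f i := by
    filter_upwards [Filter.eventually_ge_atTop {i0}] with s hs
    exact (Finset.prod_eq_zero (hs (Finset.mem_singleton_self i0)) h0).symm
  exact (tendsto_const_nhds.congr' hev)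








/-- integer coordinates of a lattice point -/
noncomputable def coords (c : ℕ) (μ : ℂ) : ℤ × ℤ := (round (μ.re / c), round (μ.im / c))

lemma latt_repr {c : ℕ} {μ : ℂ} (h : μ ∈ scaledLattice c) :
    ∃ a b : ℤ, μ = (c:ℂ) * ((a:ℂ) + (b:ℂ) * Complex.I) := by
  obtain ⟨γ, ⟨a, b, rfl⟩, rfl⟩ := h
  exact ⟨a, b, rfl⟩

lemma re_im_of_repr {c : ℕ} {a b : ℤ} :
    ((c:ℂ) * ((a:ℂ) + (b:ℂ) * Complex.I)).re = (c:ℝ) * a ∧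
    ((c:ℂ) * ((a:ℂ) + (b:ℂ) * Complex.I)).im = (c:ℝ) * b := by
  constructor <;> simp

lemma coords_spec {c : ℕ} (hc : 1 ≤ c) {μ : ℂ} (h : μ ∈ scaledLattice c) :
    μ = (c:ℂ) * (((coords c μ).1 : ℂ) + ((coords c μ).2 : ℂ) * Complex.I) := by
  obtain ⟨a, b, rfl⟩ := latt_repr h
  have hc0 : (c:ℝ) ≠ 0 := by positivity
  have h1 : coords c ((c:ℂ) * ((a:ℂ) + (b:ℂ) * Complex.I)) = (a, b) := by
    unfold coords
    rw [re_im_of_repr.1, re_im_of_repr.2]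
    rw [mul_div_cancel_left₀ _ hc0, mul_div_cancel_left₀ _ hc0]
    simp
  rw [h1]

lemma coords_injOn {c : ℕ} (hc : 1 ≤ c) : Set.InjOn (coords c) (scaledLattice c) := by
  intro μ hμ ν hν h
  rw [coords_spec hc hμ, coords_spec hc hν, h]

lemma abs_coord_le {c : ℕ} (hc : 1 ≤ c) {μ : ℂ} (h : μ ∈ scaledLattice c) :
    (c:ℝ) * |((coords c μ).1 : ℝ)| ≤ Complex.abs μ ∧
    (c:ℝ) * |((coords c μ).2 : ℝ)| ≤ Complex.abs μ := by
  obtain ⟨a, b, hab⟩ := latt_repr h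
  have hc1 : (1:ℝ) ≤ c := by exact_mod_cast hc
  have hre : μ.re = (c:ℝ) * a := by rw [hab]; exact re_im_of_repr.1
  have him : μ.im = (c:ℝ) * b := by rw [hab]; exact re_im_of_repr.2
  have h1 : coords c μ = (a, b) := by
    unfold coords; rw [hre, him, mul_div_cancel_left₀ _ (by positivity : (c:ℝ) ≠ 0),
      mul_div_cancel_left₀ _ (by positivity : (c:ℝ) ≠ 0)]; simp
  rw [h1]
  constructor
  · calc (c:ℝ) * |(a:ℝ)|
        = |μ.re| := by rw [hre, abs_mul, _root_.abs_of_nonneg (by positivity : (0:ℝ) ≤ (c:ℝ))]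
      _ ≤ Complex.abs μ := Complex.abs_re_le_norm μ
  · calc (c:ℝ) * |(b:ℝ)|
        = |μ.im| := by rw [him, abs_mul, _root_.abs_of_nonneg (by positivity : (0:ℝ) ≤ (c:ℝ))]
      _ ≤ Complex.abs μ := Complex.abs_im_le_norm μ

lemma mul_I_mem {c : ℕ} {μ : ℂ} (h : μ ∈ scaledLattice c) :
    Complex.I * μ ∈ scaledLattice c := by
  obtain ⟨a, b, rfl⟩ := latt_repr h
  refine ⟨(-b:ℤ) + (a:ℤ) * Complex.I, ⟨-b, a, by push_cast; ring⟩, by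
    push_cast
    have : Complex.I * Complex.I = -1 := Complex.I_mul_I
    ring_nf
    rw [Complex.I_sq]
    ring⟩

/-- bounded pieces of the lattice are finite -/
lemma finite_latt_ball (c : ℕ) (hc : 1 ≤ c) (R : ℝ) :
    {μ : ℂ | μ ∈ scaledLattice c ∧ Complex.abs μ ≤ R}.Finite := by
  refine Set.Finite.of_finite_image (f := coords c) ?_ ((coords_injOn hc).mono (fun μ hμ => hμ.1))
  refine Set.Finite.subset (Set.Finite.prod (Set.finite_Icc (-⌊R⌋) ⌊R⌋) (Set.finite_Icc (-⌊R⌋) ⌊R⌋)) ?_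
  rintro ⟨p, q⟩ ⟨μ, ⟨hμ, hR⟩, hpq⟩
  obtain ⟨h1c, h2c⟩ := abs_coord_le hc hμ
  have hc1 : (1:ℝ) ≤ c := by exact_mod_cast hc
  have h1 : |((coords c μ).1 : ℝ)| ≤ Complex.abs μ := by nlinarith [abs_nonneg ((coords c μ).1:ℝ)]
  have h2 : |((coords c μ).2 : ℝ)| ≤ Complex.abs μ := by nlinarith [abs_nonneg ((coords c μ).2:ℝ)]
  rw [← hpq]
  have e1 : ((coords c μ).1 : ℝ) ≤ R := le_trans (le_abs_self _) (h1.trans hR)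
  have e2 : -R ≤ ((coords c μ).1 : ℝ) := by
    have := neg_abs_le ((coords c μ).1:ℝ); linarith [h1.trans hR]
  have e3 : ((coords c μ).2 : ℝ) ≤ R := le_trans (le_abs_self _) (h2.trans hR)
  have e4 : -R ≤ ((coords c μ).2 : ℝ) := by
    have := neg_abs_le ((coords c μ).2:ℝ); linarith [h2.trans hR]
  constructor <;> simp only [Set.mem_Icc] <;> constructor
  · rw [← neg_neg ((coords c μ).1)]; exact neg_le_neg (Int.le_floor.2 (by push_cast; linarith))
  · exact Int.le_floor.2 (by push_cast; linarith)
  · rw [← neg_neg ((coords c μ).2)]; exact neg_le_neg (Int.le_floor.2 (by push_cast; linarith))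
  · exact Int.le_floor.2 (by push_cast; linarith)






lemma pow4_ge {a : ℝ} (ha : 2 ≤ a) : 2 * a ≤ a ^ 4 := by
  nlinarith [sq_nonneg a, sq_nonneg (a - 1), sq_nonneg (a^2 - a), sq_nonneg (a^2 - 1)]

lemma pow4_ge24 {a : ℝ} (ha : 10 ≤ a) : 24 * a ≤ a ^ 4 := by
  nlinarith [sq_nonneg a, sq_nonneg (a - 10), sq_nonneg (a^2 - a), sq_nonneg (a^2 - 1)]

lemma pow4_gt {a : ℝ} (ha : 3 ≤ a) : 2 * a < a ^ 4 := by
  nlinarith [sq_nonneg a, sq_nonneg (a - 1), sq_nonneg (a^2 - a), sq_nonneg (a^2 - 1)]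

section radii
variable {c : ℕ} {r : ℕ → ℝ} (hc : 5 ≤ c) (h1 : 2020 * (c:ℝ) ≤ r 1)
  (hstep : ∀ i : ℕ, 1 ≤ i → (r i) ^ 4 ≤ r (i + 1))
include hc h1 hstep

lemma r_lower : ∀ j : ℕ, 1 ≤ j → 2020 * (c:ℝ) ≤ r j := by
  intro j hj
  induction j, hj using Nat.le_induction with
  | base => exact h1
  | succ n hn ih =>
    have hc5 : (5:ℝ) ≤ c := by exact_mod_cast hc
    have h10 : (10100:ℝ) ≤ r n := by nlinarith
    refine le_trans ih (le_trans ?_ (hstep n hn))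
    nlinarith [pow4_ge (show (2:ℝ) ≤ r n by linarith)]

lemma r_big : ∀ j : ℕ, 1 ≤ j → (10100:ℝ) ≤ r j := by
  intro j hj
  have hc5 : (5:ℝ) ≤ c := by exact_mod_cast hc
  nlinarith [r_lower hc h1 hstep j hj]

lemma r_double : ∀ j : ℕ, 1 ≤ j → 2 * r j ≤ r (j + 1) := by
  intro j hj
  have h10 := r_big hc h1 hstep j hj
  nlinarith [hstep j hj, pow4_ge (show (2:ℝ) ≤ r j by linarith)]

lemma r_mono : ∀ j k : ℕ, 1 ≤ j → j ≤ k → r j ≤ r k := by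
  intro j k hj hjk
  induction k, hjk using Nat.le_induction with
  | base => exact le_rfl
  | succ n hn ih =>
    have h10 := r_big hc h1 hstep n (le_trans hj hn)
    nlinarith [r_double hc h1 hstep n (le_trans hj hn)]

lemma r_tail : ∀ i : ℕ, 1 ≤ i → ∀ k : ℕ, 2 ^ k * r (i+1) ≤ r (i+1+k) := by
  intro i hi k
  induction k with
  | zero => simp
  | succ n ih =>
    have h2 : 2 * r (i+1+n) ≤ r (i+1+n+1) := r_double hc h1 hstep _ (by omega)
    have h3 : (0:ℝ) < 2^n := by positivity
    calc 2^(n+1) * r (i+1) = 2 * (2^n * r (i+1)) := by ring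
      _ ≤ 2 * r (i+1+n) := by linarith
      _ ≤ r (i+1+(n+1)) := by rw [show i+1+(n+1) = i+1+n+1 by ring]; exact h2

lemma sum_r_le : ∀ i : ℕ, 1 ≤ i → ∑ j ∈ Finset.Icc 1 i, r j ≤ 2 * r i := by
  intro i hi
  induction i, hi using Nat.le_induction with
  | base => simp; nlinarith [r_big hc h1 hstep 1 le_rfl]
  | succ n hn ih =>
    rw [Finset.sum_Icc_succ_top (by omega)]
    have := r_double hc h1 hstep n hn
    linarith

lemma sum_inv_r_le : ∀ i : ℕ, 1 ≤ i → ∑ j ∈ Finset.Icc 1 i, (r j)⁻¹ ≤ 2 * (r 1)⁻¹ - (r i)⁻¹ := by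
  intro i hi
  induction i, hi using Nat.le_induction with
  | base => simp; nlinarith [r_big hc h1 hstep 1 le_rfl]
  | succ n hn ih =>
    rw [Finset.sum_Icc_succ_top (by omega)]
    have hd := r_double hc h1 hstep n hn
    have hp := r_big hc h1 hstep n hn
    have hp1 := r_big hc h1 hstep (n+1) (by omega)
    have key : 2 * (r (n+1))⁻¹ ≤ (r n)⁻¹ := by
      rw [show 2 * (r (n+1))⁻¹ = 2 / (r (n+1)) by ring,
        show (r n)⁻¹ = 1 / (r n) by ring,
        div_le_div_iff₀ (by linarith) (by linarith)]
      linarith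
    linarith

end radii





/-- annulus piece of the lattice -/
def Tset (c : ℕ) (r : ℕ → ℝ) (j : ℕ) : Set ℂ :=
  {μ : ℂ | 1 ≤ j ∧ μ ∈ scaledLattice c ∧ r j / 2 ≤ Complex.abs μ ∧ Complex.abs μ ≤ r j}

lemma mem_annuli_iff {c : ℕ} {r : ℕ → ℝ} {μ : ℂ} :
    μ ∈ annuliLattice c r ↔ ∃ j, μ ∈ Tset c r j := Iff.rfl

lemma Tset_finite {c : ℕ} (hc : 1 ≤ c) (r : ℕ → ℝ) (j : ℕ) : (Tset c r j).Finite :=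
  Set.Finite.subset (finite_latt_ball c hc (r j)) (fun μ hμ => ⟨hμ.2.1, hμ.2.2.2⟩)

lemma rot_mem {c : ℕ} {r : ℕ → ℝ} {j : ℕ} {μ : ℂ} (h : μ ∈ Tset c r j) :
    Complex.I * μ ∈ Tset c r j := by
  obtain ⟨hj, hlat, hlo, hhi⟩ := h
  refine ⟨hj, mul_I_mem hlat, ?_, ?_⟩ <;>
    simp only [map_mul, Complex.abs_I, one_mul] <;> assumption

lemma sum_inv_sq_zero {c : ℕ} (hc : 1 ≤ c) {r : ℕ → ℝ} {j : ℕ} :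
    ∑ μ ∈ (Tset_finite hc r j).toFinset, ((μ:ℂ)^2)⁻¹ = 0 := by
  have key : ∑ μ ∈ (Tset_finite hc r j).toFinset, ((μ:ℂ)^2)⁻¹
      = ∑ μ ∈ (Tset_finite hc r j).toFinset, ((Complex.I * μ)^2)⁻¹ := by
    refine Finset.sum_nbij' (i := fun μ => Complex.I * μ) (j := fun μ => -Complex.I * μ)
      ?_ ?_ ?_ ?_ ?_
    · intro a ha
      simp only [Set.Finite.mem_toFinset] at *
      exact rot_mem ha
    · intro a ha
      simp only [Set.Finite.mem_toFinset] at *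
      have h3 : -Complex.I * a = Complex.I * (Complex.I * (Complex.I * a)) := by
        rw [show Complex.I*(Complex.I*(Complex.I*a)) = (Complex.I*Complex.I)*(Complex.I*a) by ring,
          Complex.I_mul_I, neg_one_mul, neg_mul]
      rw [h3]
      exact rot_mem (rot_mem (rot_mem ha))
    · intro a _
      show -Complex.I * (Complex.I * a) = a
      rw [← mul_assoc, neg_mul, Complex.I_mul_I, neg_neg, one_mul]
    · intro a _
      show Complex.I * (-Complex.I * a) = a
      rw [← mul_assoc, mul_neg, Complex.I_mul_I, neg_neg, one_mul]
    · intro a _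
      rw [show Complex.I * (Complex.I * a) = -a by
        rw [← mul_assoc, Complex.I_mul_I, neg_one_mul], neg_sq]
  have h2 : ∀ μ : ℂ, ((Complex.I * μ)^2)⁻¹ = -(((μ:ℂ)^2)⁻¹) := by
    intro μ
    rw [mul_pow, Complex.I_sq]
    rw [neg_one_mul, neg_inv]
  rw [Finset.sum_congr rfl (fun μ _ => h2 μ), Finset.sum_neg_distrib] at key
  linear_combination key / 2


lemma Tset_card {c : ℕ} (hc : 1 ≤ c) {r : ℕ → ℝ} {j : ℕ} (hrj : (c:ℝ) ≤ r j) :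
    (((Tset_finite hc r j).toFinset.card : ℝ)) ≤ 9 * (r j)^2 / (c:ℝ)^2 := by
  have hc0 : (0:ℝ) < c := by positivity
  have hq1 : (1:ℝ) ≤ r j / c := (one_le_div hc0).2 hrj
  set n : ℤ := ⌊r j / (c:ℝ)⌋ with hn
  have hn1 : 1 ≤ n := by exact_mod_cast Int.le_floor.2 (by push_cast; linarith)
  have hnle : (n:ℝ) ≤ r j / c := Int.floor_le _
  have hcard : (Tset_finite hc r j).toFinset.card ≤
      ((Finset.Icc (-n) n) ×ˢ (Finset.Icc (-n) n)).card := by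
    refine Finset.card_le_card_of_injOn (coords c) ?_ ?_
    · intro μ hμ
      rw [Finset.mem_coe, Set.Finite.mem_toFinset] at hμ
      obtain ⟨hj, hlat, hlo, hhi⟩ := hμ
      obtain ⟨e1, e2⟩ := abs_coord_le hc hlat
      have f1 : |((coords c μ).1 : ℝ)| ≤ r j / c := by
        rw [le_div_iff₀ hc0]; nlinarith
      have f2 : |((coords c μ).2 : ℝ)| ≤ r j / c := by
        rw [le_div_iff₀ hc0]; nlinarith
      rw [Finset.mem_coe, Finset.mem_product, Finset.mem_Icc, Finset.mem_Icc]
      have g1 : (coords c μ).1 ≤ n := Int.le_floor.2 (le_trans (le_abs_self _) f1)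
      have g2 : -(coords c μ).1 ≤ n := Int.le_floor.2 (by
        push_cast; linarith [neg_abs_le ((coords c μ).1 : ℝ)])
      have g3 : (coords c μ).2 ≤ n := Int.le_floor.2 (le_trans (le_abs_self _) f2)
      have g4 : -(coords c μ).2 ≤ n := Int.le_floor.2 (by
        push_cast; linarith [neg_abs_le ((coords c μ).2 : ℝ)])
      exact ⟨⟨by omega, g1⟩, ⟨by omega, g3⟩⟩
    · intro μ hμ ν hν hh
      simp only [Finset.mem_coe, Set.Finite.mem_toFinset] at hμ hν
      exact coords_injOn hc hμ.2.1 hν.2.1 hh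
  have hcardval : (((Finset.Icc (-n) n) ×ˢ (Finset.Icc (-n) n)).card : ℝ)
      = ((2*n+1 : ℤ) : ℝ)^2 := by
    rw [Finset.card_product, Int.card_Icc]
    have he : (n + 1 - -n) = 2*n+1 := by ring
    rw [he]
    have h0 : (0:ℤ) ≤ 2*n+1 := by omega
    have hcast : (((2*n+1).toNat : ℕ) : ℝ) = ((2*n+1 : ℤ) : ℝ) := by
      exact_mod_cast congrArg (fun m : ℤ => (m : ℝ)) (Int.toNat_of_nonneg h0)
    rw [Nat.cast_mul, hcast]
    ring
  have hfinal : ((2*n+1 : ℤ) : ℝ)^2 ≤ 9 * (r j)^2 / (c:ℝ)^2 := by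
    have hb : ((2*n+1 : ℤ) : ℝ) ≤ 3 * (r j / c) := by push_cast; linarith
    have hnn : (0:ℝ) ≤ ((2*n+1 : ℤ) : ℝ) := by push_cast; exact_mod_cast by positivity
    calc ((2*n+1 : ℤ) : ℝ)^2 ≤ (3 * (r j / c))^2 := by nlinarith
      _ = 9 * (r j)^2 / (c:ℝ)^2 := by field_simp; ring
  calc (((Tset_finite hc r j).toFinset.card : ℝ))
      ≤ (((Finset.Icc (-n) n) ×ˢ (Finset.Icc (-n) n)).card : ℝ) := by exact_mod_cast hcard
    _ = ((2*n+1 : ℤ) : ℝ)^2 := hcardval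
    _ ≤ 9 * (r j)^2 / (c:ℝ)^2 := hfinal

/-- the log of the Weierstrass factor -/
noncomputable def Lf (x : ℂ → ℂ) (z μ : ℂ) : ℂ :=
  Complex.log (1 - z / (μ + x μ)) + (z / (μ + x μ) + z^2 / (2 * (μ + x μ)^2))

lemma xabs_le {x : ℂ → ℂ} (hx : ∀ μ, x μ ∈ fundDomain) (μ : ℂ) : Complex.abs (x μ) ≤ 2 := by
  obtain ⟨h1, h2, h3, h4⟩ := hx μ
  refine le_trans (Complex.norm_le_abs_re_add_abs_im _) ?_
  rw [_root_.abs_of_nonneg h1, _root_.abs_of_nonneg h3]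
  linarith

section pointfacts
variable {c : ℕ} {r : ℕ → ℝ} {x : ℂ → ℂ} {j : ℕ} {μ z : ℂ}
variable (hc : 5 ≤ c) (h1 : 2020 * (c:ℝ) ≤ r 1)
  (hstep : ∀ i : ℕ, 1 ≤ i → (r i) ^ 4 ≤ r (i + 1)) (hx : ∀ μ, x μ ∈ fundDomain)

include hc h1 hstep in
lemma point_rj (hμ : μ ∈ Tset c r j) : (10100:ℝ) ≤ r j := r_big hc h1 hstep j hμ.1

include hc h1 hstep in
lemma point_absmu (hμ : μ ∈ Tset c r j) :
    r j / 2 ≤ Complex.abs μ ∧ Complex.abs μ ≤ r j := ⟨hμ.2.2.1, hμ.2.2.2⟩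

include hc h1 hstep hx in
lemma point_abslam (hμ : μ ∈ Tset c r j) :
    Complex.abs μ - 2 ≤ Complex.abs (μ + x μ) ∧ Complex.abs (μ + x μ) ≤ Complex.abs μ + 2 ∧
    r j / 4 ≤ Complex.abs (μ + x μ) ∧ Complex.abs μ / 2 ≤ Complex.abs (μ + x μ) ∧
    (μ + x μ) ≠ 0 := by
  have hrj := point_rj hc h1 hstep hμ
  have hlo := hμ.2.2.1
  have hxa := xabs_le hx μ
  have e1 : Complex.abs μ - 2 ≤ Complex.abs (μ + x μ) := by
    have h := Complex.abs.add_le (μ + x μ) (-(x μ))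
    rw [add_neg_cancel_right, map_neg_eq_map] at h
    linarith
  have e2 : Complex.abs (μ + x μ) ≤ Complex.abs μ + 2 := by
    refine le_trans (Complex.abs.add_le μ (x μ)) (by linarith)
  refine ⟨e1, e2, by linarith, by linarith, ?_⟩
  intro h0
  rw [h0] at e1
  simp only [map_zero] at e1
  linarith

include hc h1 hstep hx in
lemma diff_bound (hμ : μ ∈ Tset c r j) :
    Complex.abs (((μ + x μ)^2)⁻¹ - ((μ:ℂ)^2)⁻¹) ≤ 192 / (r j)^3 := by
  have hrj := point_rj hc h1 hstep hμ
  have hlo := hμ.2.2.1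
  have hxa := xabs_le hx μ
  obtain ⟨e1, e2, e3, e4, hne⟩ := point_abslam hc h1 hstep hx hμ
  have hmu0 : (μ:ℂ) ≠ 0 := by
    intro h0; rw [h0] at hlo; simp at hlo; linarith
  have key : ((μ + x μ)^2)⁻¹ - ((μ:ℂ)^2)⁻¹ = (-(x μ) * (2*μ + x μ)) / ((μ + x μ)^2 * μ^2) := by
    field_simp
    ring
  rw [key, map_div₀, map_mul, map_neg_eq_map]
  have hnum : Complex.abs (x μ) * Complex.abs (2*μ + x μ) ≤ 6 * Complex.abs μ := by
    have h2 : Complex.abs (2*μ + x μ) ≤ 2 * Complex.abs μ + 2 := by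
      refine le_trans (Complex.abs.add_le _ _) ?_
      simp only [map_mul, Complex.abs_two]
      linarith
    have hmub : (2:ℝ) ≤ Complex.abs μ := by linarith
    nlinarith [Complex.abs.nonneg (x μ), Complex.abs.nonneg (2*μ + x μ)]
  have hden : (r j)^3 * Complex.abs μ / 32 ≤ Complex.abs ((μ + x μ)^2 * μ^2) := by
    rw [map_mul, map_pow, map_pow]
    have h5 : r j / 4 ≤ Complex.abs (μ + x μ) := e3
    have h6 : r j / 2 ≤ Complex.abs μ := hlo
    have h7 : (0:ℝ) ≤ r j := by linarith
    have p1 : (r j / 4)^2 ≤ Complex.abs (μ + x μ)^2 := by nlinarith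
    have p2 : (r j / 2) * Complex.abs μ ≤ Complex.abs μ^2 := by
      nlinarith [Complex.abs.nonneg μ]
    have p3 : (r j/4)^2 * ((r j/2) * Complex.abs μ) ≤
        Complex.abs (μ + x μ)^2 * Complex.abs μ^2 :=
      mul_le_mul p1 p2 (mul_nonneg (by linarith) (Complex.abs.nonneg μ)) (sq_nonneg _)
    linarith [p3]
  have hdenpos : (0:ℝ) < (r j)^3 * Complex.abs μ / 32 := by
    have : (0:ℝ) < Complex.abs μ := by linarith
    positivity
  calc Complex.abs (x μ) * Complex.abs (2*μ + x μ) / Complex.abs ((μ + x μ)^2 * μ^2)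
      ≤ 6 * Complex.abs μ / ((r j)^3 * Complex.abs μ / 32) :=
        div_le_div₀ (by positivity) hnum hdenpos hden
    _ = 192 / (r j)^3 := by
        have h8 : Complex.abs μ ≠ 0 := by intro h0; rw [h0] at hlo; linarith
        have h9 : r j ≠ 0 := by intro h0; rw [h0] at hrj; linarith
        field_simp
        ring

include hc h1 hstep hx in
lemma annulusA (hc1 : 1 ≤ c) (z : ℂ) {j : ℕ} (hj : 1 ≤ j) :
    ∑ μ ∈ (Tset_finite hc1 r j).toFinset, (Lf x z μ).re ≤
      72 * Complex.abs z * r j / (c:ℝ)^2 + 864 * (Complex.abs z)^2 / ((c:ℝ)^2 * r j) := by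
  classical
  set S := (Tset_finite hc1 r j).toFinset with hS
  have hrj : (10100:ℝ) ≤ r j := r_big hc h1 hstep j hj
  have hrc : (c:ℝ) ≤ r j := by
    have := r_lower hc h1 hstep j hj
    have hc5 : (5:ℝ) ≤ c := by exact_mod_cast hc
    nlinarith
  have hcard : ((S.card : ℝ)) ≤ 9 * (r j)^2 / (c:ℝ)^2 := Tset_card hc1 hrc
  have hcpos : (0:ℝ) < c := by positivity
  have hmem : ∀ μ ∈ S, μ ∈ Tset c r j := fun μ hμ => (Set.Finite.mem_toFinset _).1 hμ
  -- decompose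
  have hdec : ∑ μ ∈ S, (Lf x z μ).re
      = ∑ μ ∈ S, (Complex.log (1 - z/(μ + x μ)) + z/(μ + x μ)).re
        + (z^2/2 * ∑ μ ∈ S, (((μ + x μ):ℂ)^2)⁻¹).re := by
    rw [Finset.mul_sum, Complex.re_sum, ← Finset.sum_add_distrib]
    refine Finset.sum_congr rfl (fun μ _ => ?_)
    rw [← Complex.add_re]
    congr 1
    unfold Lf
    rw [show z^2/(2*(μ + x μ)^2) = z^2/2 * (((μ + x μ):ℂ)^2)⁻¹ by
      simp [div_eq_mul_inv, mul_inv, mul_assoc, mul_comm, mul_left_comm]]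
    ring
  rw [hdec]
  -- first part
  have habslam : ∀ μ ∈ S, Complex.abs (z / (μ + x μ)) ≤ 4 * Complex.abs z / r j := by
    intro μ hμ
    obtain ⟨_, _, e3, _, hne⟩ := point_abslam hc h1 hstep hx (hmem μ hμ)
    rw [map_div₀]
    rw [show 4 * Complex.abs z / r j = Complex.abs z / (r j / 4) by ring]
    exact div_le_div_of_nonneg_left (Complex.abs.nonneg z) (by linarith) e3
  have hfirst : ∑ μ ∈ S, (Complex.log (1 - z/(μ + x μ)) + z/(μ + x μ)).re
      ≤ 72 * Complex.abs z * r j / (c:ℝ)^2 := by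
    have hb : ∀ μ ∈ S, (Complex.log (1 - z/(μ + x μ)) + z/(μ + x μ)).re
        ≤ 8 * Complex.abs z / r j := by
      intro μ hμ
      refine le_trans (re_le_lin _) ?_
      have h2 := habslam μ hμ
      have h3 : (2:ℝ) * Complex.abs (z / (μ + x μ)) ≤ 2 * (4 * Complex.abs z / r j) := by
        linarith
      refine h3.trans (le_of_eq (by ring))
    refine le_trans (Finset.sum_le_card_nsmul S _ _ hb) ?_
    rw [nsmul_eq_mul]
    have hz8 : (0:ℝ) ≤ 8 * Complex.abs z / r j := by positivity
    calc (S.card : ℝ) * (8 * Complex.abs z / r j)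
        ≤ (9 * (r j)^2 / (c:ℝ)^2) * (8 * Complex.abs z / r j) := by
          exact mul_le_mul_of_nonneg_right hcard hz8
      _ = 72 * Complex.abs z * r j / (c:ℝ)^2 := by
          field_simp
          ring
  -- second part
  have hD : Complex.abs (∑ μ ∈ S, (((μ + x μ):ℂ)^2)⁻¹)
      ≤ (S.card : ℝ) * (192 / (r j)^3) := by
    have hrw : ∑ μ ∈ S, (((μ + x μ):ℂ)^2)⁻¹
        = ∑ μ ∈ S, ((((μ + x μ):ℂ)^2)⁻¹ - ((μ:ℂ)^2)⁻¹) := by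
      rw [Finset.sum_sub_distrib, sum_inv_sq_zero hc1, sub_zero]
    rw [hrw]
    refine le_trans (Complex.abs.sum_le _ _) ?_
    refine le_trans (Finset.sum_le_card_nsmul S _ _
      (fun μ hμ => diff_bound hc h1 hstep hx (hmem μ hμ))) ?_
    rw [nsmul_eq_mul]
  have hsecond : (z^2/2 * ∑ μ ∈ S, (((μ + x μ):ℂ)^2)⁻¹).re
      ≤ 864 * (Complex.abs z)^2 / ((c:ℝ)^2 * r j) := by
    refine le_trans (Complex.re_le_norm _) ?_
    rw [Complex.norm_eq_abs, map_mul, map_div₀]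
    simp only [map_pow, Complex.abs_two]
    calc (Complex.abs z)^2 / 2 * Complex.abs (∑ μ ∈ S, (((μ + x μ):ℂ)^2)⁻¹)
        ≤ (Complex.abs z)^2 / 2 * ((9 * (r j)^2 / (c:ℝ)^2) * (192 / (r j)^3)) := by
          refine mul_le_mul_of_nonneg_left (le_trans hD ?_) (by positivity)
          exact mul_le_mul_of_nonneg_right hcard (by positivity)
      _ = 864 * (Complex.abs z)^2 / ((c:ℝ)^2 * r j) := by
          field_simp
          ring
  linarith

include hc h1 hstep hx in
lemma annulusB (hc1 : 1 ≤ c) (z : ℂ) {j : ℕ} (hj : 1 ≤ j) (h8 : 8 * Complex.abs z ≤ r j) :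
    ∑ μ ∈ (Tset_finite hc1 r j).toFinset, (Lf x z μ).re
      ≤ 576 * (Complex.abs z)^3 / ((c:ℝ)^2 * r j) := by
  classical
  set S := (Tset_finite hc1 r j).toFinset with hS
  have hrj : (10100:ℝ) ≤ r j := r_big hc h1 hstep j hj
  have hrc : (c:ℝ) ≤ r j := by
    have := r_lower hc h1 hstep j hj
    have hc5 : (5:ℝ) ≤ c := by exact_mod_cast hc
    nlinarith
  have hcard : ((S.card : ℝ)) ≤ 9 * (r j)^2 / (c:ℝ)^2 := Tset_card hc1 hrc
  have hmem : ∀ μ ∈ S, μ ∈ Tset c r j := fun μ hμ => (Set.Finite.mem_toFinset _).1 hμ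
  have hb : ∀ μ ∈ S, (Lf x z μ).re ≤ 64 * (Complex.abs z)^3 / (r j)^3 := by
    intro μ hμ
    obtain ⟨_, _, e3, _, hne⟩ := point_abslam hc h1 hstep hx (hmem μ hμ)
    have hw : Complex.abs (z / (μ + x μ)) ≤ 4 * Complex.abs z / r j := by
      rw [map_div₀, show 4 * Complex.abs z / r j = Complex.abs z / (r j / 4) by ring]
      exact div_le_div_of_nonneg_left (Complex.abs.nonneg z) (by linarith) e3
    have hwhalf : Complex.abs (z / (μ + x μ)) ≤ 1/2 := by
      refine hw.trans ?_
      rw [div_le_div_iff₀ (by linarith) (by norm_num)]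
      linarith
    have hq : (z/(μ + x μ))^2/2 = z^2/(2*(μ + x μ)^2) := by
      rw [div_pow, div_div, mul_comm ((μ + x μ)^2) 2]
    have hLf : Lf x z μ = Complex.log (1 - z/(μ + x μ)) +
        (z/(μ + x μ) + (z/(μ + x μ))^2/2) := by
      unfold Lf
      rw [hq]
    have := logb3 hwhalf
    rw [← hLf] at this
    refine le_trans (Complex.re_le_norm _) (le_trans this ?_)
    calc (Complex.abs (z / (μ + x μ)))^3 ≤ (4 * Complex.abs z / r j)^3 := by
          refine pow_le_pow_left₀ (Complex.abs.nonneg _) hw 3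
      _ = 64 * (Complex.abs z)^3 / (r j)^3 := by
          field_simp
          ring
  refine le_trans (Finset.sum_le_card_nsmul S _ _ hb) ?_
  rw [nsmul_eq_mul]
  calc (S.card : ℝ) * (64 * (Complex.abs z)^3 / (r j)^3)
      ≤ (9 * (r j)^2 / (c:ℝ)^2) * (64 * (Complex.abs z)^3 / (r j)^3) :=
        mul_le_mul_of_nonneg_right hcard (by positivity)
    _ = 576 * (Complex.abs z)^3 / ((c:ℝ)^2 * r j) := by
        have hc0 : (c:ℝ) ≠ 0 := by positivity
        have hr0 : r j ≠ 0 := by intro h0; rw [h0] at hrj; linarith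
        field_simp
        ring

include hc h1 hstep in
lemma mem_M_facts {μ : ℂ} (hμ : μ ∈ annuliLattice c r) :
    μ ∈ scaledLattice c ∧ 1010 * (c:ℝ) ≤ Complex.abs μ := by
  obtain ⟨j, hj⟩ := hμ
  refine ⟨hj.2.1, ?_⟩
  have := r_lower hc h1 hstep j hj.1
  have := hj.2.2.1
  rw [← Complex.norm_eq_abs]
  linarith

include hc h1 hstep in
lemma summable_inv_cube (hc1 : 1 ≤ c) :
    Summable (fun μ : annuliLattice c r => ((Complex.abs (μ:ℂ))^3)⁻¹) := by
  have hc5 : (5:ℝ) ≤ c := by exact_mod_cast hc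
  set e : annuliLattice c r → (Fin 2 → ℤ) :=
    fun μ => ![(coords c (μ:ℂ)).1, (coords c (μ:ℂ)).2] with he
  have hmemlat : ∀ μ : annuliLattice c r, (μ:ℂ) ∈ scaledLattice c :=
    fun μ => (mem_M_facts hc h1 hstep μ.2).1
  have habs : ∀ μ : annuliLattice c r, (0:ℝ) < Complex.abs (μ:ℂ) := by
    intro μ
    have := (mem_M_facts hc h1 hstep μ.2).2
    linarith
  have hinj : Function.Injective e := by
    intro μ ν h
    have h0 : (coords c (μ:ℂ)).1 = (coords c (ν:ℂ)).1 := by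
      have := congrFun h 0; simpa [he] using this
    have h1' : (coords c (μ:ℂ)).2 = (coords c (ν:ℂ)).2 := by
      have := congrFun h 1; simpa [he] using this
    have : coords c (μ:ℂ) = coords c (ν:ℂ) := Prod.ext h0 h1'
    exact Subtype.ext (coords_injOn hc1 (hmemlat μ) (hmemlat ν) this)
  have hsum : Summable (fun μ : annuliLattice c r => ‖e μ‖ ^ (-(3:ℝ))) :=
    (EisensteinSeries.summable_one_div_norm_rpow (by norm_num : (2:ℝ) < 3)).comp_injective hinj
  refine hsum.of_nonneg_of_le (fun μ => by positivity) (fun μ => ?_)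
  have hmu := habs μ
  -- ‖e μ‖ ≤ abs μ
  have hne : ‖e μ‖ ≤ Complex.abs (μ:ℂ) := by
    refine (pi_norm_le_iff_of_nonneg (Complex.abs.nonneg _)).2 (fun k => ?_)
    obtain ⟨e1, e2⟩ := abs_coord_le hc1 (hmemlat μ)
    have hc1R : (1:ℝ) ≤ c := by exact_mod_cast hc1
    fin_cases k
    · show ‖((coords c (μ:ℂ)).1 : ℤ)‖ ≤ Complex.abs (μ:ℂ)
      rw [Int.norm_eq_abs]
      push_cast
      nlinarith [abs_nonneg ((coords c (μ:ℂ)).1 : ℝ)]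
    · show ‖((coords c (μ:ℂ)).2 : ℤ)‖ ≤ Complex.abs (μ:ℂ)
      rw [Int.norm_eq_abs]
      push_cast
      nlinarith [abs_nonneg ((coords c (μ:ℂ)).2 : ℝ)]
  have hepos : (0:ℝ) < ‖e μ‖ := by
    rcases eq_or_lt_of_le (norm_nonneg (e μ)) with h0 | h0
    · exfalso
      have hz : e μ = 0 := by rwa [eq_comm, norm_eq_zero] at h0
      have h00 : coords c (μ:ℂ) = (0, 0) := by
        have ha := congrFun hz 0
        have hb := congrFun hz 1
        simp only [he, Matrix.cons_val_zero, Matrix.cons_val_one, Matrix.head_cons,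
          Pi.zero_apply] at ha hb
        exact Prod.ext ha hb
      have := coords_spec hc1 (hmemlat μ)
      rw [h00] at this
      simp at this
      rw [this] at hmu
      simp at hmu
    · exact h0
  rw [Real.rpow_neg (norm_nonneg _), show (3:ℝ) = ((3:ℕ):ℝ) by norm_num,
    Real.rpow_natCast]
  exact inv_anti₀ (by positivity) (pow_le_pow_left₀ (le_of_lt hepos) hne 3)

include hc h1 hstep in
lemma finite_absM (hc1 : 1 ≤ c) (R : ℝ) :
    {μ : annuliLattice c r | Complex.abs (μ:ℂ) ≤ R}.Finite := by
  have h := (finite_latt_ball c hc1 R).preimage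
    (Set.injOn_of_injective (Subtype.coe_injective (p := (· ∈ annuliLattice c r))))
  refine Set.Finite.subset h ?_
  intro μ hμ
  exact ⟨(mem_M_facts hc h1 hstep μ.2).1, hμ⟩

lemma wFactor_eq_cexp {z lam : ℂ} (h : 1 - z/lam ≠ 0) :
    wFactor z lam = Complex.exp (Complex.log (1 - z/lam) + (z/lam + z^2/(2*lam^2))) := by
  rw [Complex.exp_add, Complex.exp_log h]
  rfl

include hc h1 hstep hx in
lemma Lf_norm_far {μ z : ℂ} (hμ : μ ∈ annuliLattice c r)
    (hfar : 2 * Complex.abs z + 4 < Complex.abs μ) :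
    ‖Lf x z μ‖ ≤ 8 * (Complex.abs z)^3 * ((Complex.abs μ)^3)⁻¹ := by
  have hxa := xabs_le hx μ
  have habs := (mem_M_facts hc h1 hstep hμ).2
  have hc5 : (5:ℝ) ≤ c := by exact_mod_cast hc
  have hz0 : (0:ℝ) ≤ Complex.abs z := Complex.abs.nonneg z
  have e1 : Complex.abs μ - 2 ≤ Complex.abs (μ + x μ) := by
    have h := Complex.abs.add_le (μ + x μ) (-(x μ))
    rw [add_neg_cancel_right, map_neg_eq_map] at h
    linarith
  have hlam0 : (0:ℝ) < Complex.abs (μ + x μ) := by linarith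
  have hlamne : μ + x μ ≠ 0 := by
    intro h0; rw [h0] at hlam0; simp at hlam0
  have hw : Complex.abs (z / (μ + x μ)) ≤ 2 * Complex.abs z / Complex.abs μ := by
    rw [map_div₀]
    rw [div_le_div_iff₀ hlam0 (by linarith)]
    nlinarith
  have hwhalf : Complex.abs (z / (μ + x μ)) ≤ 1/2 := by
    rw [map_div₀]
    rw [div_le_div_iff₀ hlam0 (by norm_num)]
    linarith
  have hq : (z/(μ + x μ))^2/2 = z^2/(2*(μ + x μ)^2) := by
    rw [div_pow, div_div, mul_comm ((μ + x μ)^2) 2]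
  have hLf : Lf x z μ = Complex.log (1 - z/(μ + x μ)) +
      (z/(μ + x μ) + (z/(μ + x μ))^2/2) := by
    unfold Lf
    rw [hq]
  rw [hLf]
  refine le_trans (logb3 hwhalf) ?_
  calc (Complex.abs (z / (μ + x μ)))^3 ≤ (2 * Complex.abs z / Complex.abs μ)^3 :=
        pow_le_pow_left₀ (Complex.abs.nonneg _) hw 3
    _ = 8 * (Complex.abs z)^3 * ((Complex.abs μ)^3)⁻¹ := by
        field_simp
        ring

include hc h1 hstep hx in
lemma summable_Lf (hc1 : 1 ≤ c) (z : ℂ) :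
    Summable (fun μ : annuliLattice c r => Lf x z (μ:ℂ)) := by
  refine Summable.of_norm_bounded_eventually
    (g := fun μ : annuliLattice c r => 8 * (Complex.abs z)^3 * ((Complex.abs (μ:ℂ))^3)⁻¹)
    (((summable_inv_cube hc h1 hstep hc1)).mul_left _) ?_
  rw [Filter.eventually_cofinite]
  refine Set.Finite.subset (finite_absM hc h1 hstep hc1 (2 * Complex.abs z + 4)) ?_
  intro μ hμ
  by_contra hgt
  simp only [Set.mem_setOf_eq, not_le] at hgt
  exact hμ (Lf_norm_far hc h1 hstep hx μ.2 hgt)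

include hc h1 hstep in
lemma same_annulus {μ : ℂ} {j k : ℕ} (hj : μ ∈ Tset c r j) (hk : μ ∈ Tset c r k) : j = k := by
  have key : ∀ a b : ℕ, a < b → μ ∈ Tset c r a → μ ∈ Tset c r b → False := by
    intro a b hab ha hb
    have h10 := r_big hc h1 hstep a ha.1
    have hq := hstep a ha.1
    have hmono : r (a+1) ≤ r b := r_mono hc h1 hstep (a+1) b (by omega) (by omega)
    have hhi : Complex.abs μ ≤ r a := ha.2.2.2
    have hlo : r b / 2 ≤ Complex.abs μ := hb.2.2.1
    nlinarith [pow4_gt (show (3:ℝ) ≤ r a by linarith)]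
  rcases lt_trichotomy j k with h | h | h
  · exact absurd (key j k h hj hk) (by simp)
  · exact h
  · exact absurd (key k j h hk hj) (by simp)

include hc h1 hstep hx in
set_option maxHeartbeats 2000000 in
lemma total_bound (hc1 : 1 ≤ c) {i : ℕ} (hi : 2 ≤ i) {z : ℂ}
    (hz1 : r i / 3 ≤ Complex.abs z) (hz2 : Complex.abs z ≤ 3 * r i) :
    ∑' (μ : annuliLattice c r), (Lf x z (μ:ℂ)).re ≤ 435 * (r i)^2 / (c:ℝ)^2 := by
  classical
  have hi1 : 1 ≤ i := by omega
  have hA : (10100:ℝ) ≤ r i := r_big hc h1 hstep i hi1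
  have hApos : (0:ℝ) < r i := by linarith
  have hCpos : (0:ℝ) < (c:ℝ)^2 := by positivity
  have hz0 : (0:ℝ) ≤ Complex.abs z := Complex.abs.nonneg z
  -- the sigma equivalence
  set eFun : (Σ j : ℕ, ↥(Tset c r j)) → ↥(annuliLattice c r) :=
    fun p => ⟨(p.2 : ℂ), ⟨p.1, p.2.2⟩⟩ with heFun
  have hinj : Function.Injective eFun := by
    rintro ⟨j, ⟨μ, hμ⟩⟩ ⟨k, ⟨ν, hν⟩⟩ hpq
    simp only [heFun, Subtype.mk.injEq] at hpq
    obtain rfl : μ = ν := congrArg Subtype.val hpq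
    have : j = k := same_annulus hc h1 hstep hμ hν
    subst this
    rfl
  have hsur : Function.Surjective eFun := by
    rintro ⟨μ, hμ⟩
    obtain ⟨j, hj⟩ := hμ
    exact ⟨⟨j, ⟨μ, hj⟩⟩, rfl⟩
  set e := Equiv.ofBijective eFun ⟨hinj, hsur⟩ with he
  -- summability
  have hsum := summable_Lf hc h1 hstep hx hc1 z
  have hre : Summable (fun μ : annuliLattice c r => (Lf x z (μ:ℂ)).re) :=
    (Complex.hasSum_re hsum.hasSum).summable
  have hfe : Summable ((fun μ : annuliLattice c r => (Lf x z (μ:ℂ)).re) ∘ e) :=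
    e.summable_iff.mpr hre
  -- per-annulus finite sums
  set g : ℕ → ℝ := fun j => ∑ μ ∈ (Tset_finite hc1 r j).toFinset, (Lf x z μ).re with hg
  have hinner : ∀ j : ℕ, ∑' (μ : ↥(Tset c r j)), (Lf x z (μ:ℂ)).re = g j := by
    intro j
    have h := Finset.tsum_subtype' ((Tset_finite hc1 r j).toFinset) (fun μ => (Lf x z μ).re)
    rwa [Set.Finite.coe_toFinset] at h
  have hstep1 : ∑' (μ : annuliLattice c r), (Lf x z (μ:ℂ)).re = ∑' j, g j := by
    calc ∑' (μ : annuliLattice c r), (Lf x z (μ:ℂ)).re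
        = ∑' p : (Σ j : ℕ, ↥(Tset c r j)),
            ((fun μ : annuliLattice c r => (Lf x z (μ:ℂ)).re) ∘ e) p :=
          (e.tsum_eq (fun μ : annuliLattice c r => (Lf x z (μ:ℂ)).re)).symm
      _ = ∑' j, ∑' (μ : ↥(Tset c r j)),
            ((fun μ : annuliLattice c r => (Lf x z (μ:ℂ)).re) ∘ e) ⟨j, μ⟩ := hfe.tsum_sigma
      _ = ∑' j, g j := tsum_congr (fun j => (tsum_congr (fun μ => rfl)).trans (hinner j))
  have hgsummable : Summable g := by
    refine (hfe.sigma).congr (fun j => hinner j)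
  rw [hstep1]
  -- split the sum over j
  rw [← Summable.sum_add_tsum_nat_add (i+1) hgsummable]
  -- the finite part
  have hg0 : g 0 = 0 := by
    have hempty : (Tset_finite hc1 r 0).toFinset = ∅ := by
      ext μ
      simp only [Set.Finite.mem_toFinset, Finset.notMem_empty, iff_false]
      intro hμ
      exact absurd hμ.1 (by omega)
    show (∑ μ ∈ (Tset_finite hc1 r 0).toFinset, (Lf x z μ).re) = 0
    rw [hempty, Finset.sum_empty]
  have hrange : Finset.range (i+1) = insert 0 (Finset.Icc 1 i) := by
    ext m
    simp only [Finset.mem_range, Finset.mem_insert, Finset.mem_Icc]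
    omega
  have hsplit0 : ∑ j ∈ Finset.range (i+1), g j = ∑ j ∈ Finset.Icc 1 i, g j := by
    rw [hrange, Finset.sum_insert (by simp), hg0, zero_add]
  have hfinpart : ∑ j ∈ Finset.Icc 1 i, g j ≤ 434 * (r i)^2 / (c:ℝ)^2 := by
    set az := Complex.abs z with haz
    have hbound : ∀ j ∈ Finset.Icc 1 i, g j ≤
        72 * az / (c:ℝ)^2 * r j + 864 * az^2 / (c:ℝ)^2 * (r j)⁻¹ := by
      intro j hj
      have hj1 : 1 ≤ j := (Finset.mem_Icc.1 hj).1
      refine (annulusA hc h1 hstep hx hc1 z hj1).trans (le_of_eq ?_)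
      have hrj : (10100:ℝ) ≤ r j := r_big hc h1 hstep j hj1
      have hrj0 : r j ≠ 0 := by linarith
      have hc0 : ((c:ℝ)^2) ≠ 0 := by positivity
      field_simp
      try ring
    refine le_trans (Finset.sum_le_sum hbound) ?_
    rw [Finset.sum_add_distrib, ← Finset.mul_sum, ← Finset.mul_sum]
    set S1 := ∑ j ∈ Finset.Icc 1 i, r j with hS1
    set S2 := ∑ j ∈ Finset.Icc 1 i, (r j)⁻¹ with hS2
    have t1 : S1 ≤ 2 * r i := sum_r_le hc h1 hstep i hi1
    have t2 : S2 ≤ 2 * (r 1)⁻¹ := by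
      have hs := sum_inv_r_le hc h1 hstep i hi1
      have hri : (0:ℝ) ≤ (r i)⁻¹ := by positivity
      linarith
    have hr1 : (10100:ℝ) ≤ r 1 := r_big hc h1 hstep 1 le_rfl
    have t2' : (r 1)⁻¹ ≤ 1/10100 := by
      have hv := inv_anti₀ (show (0:ℝ) < 10100 by norm_num) hr1
      rw [show (1:ℝ)/10100 = (10100:ℝ)⁻¹ by norm_num]
      exact hv
    have hS1nn : (0:ℝ) ≤ S1 := Finset.sum_nonneg (fun j hj => by
      have := r_big hc h1 hstep j (Finset.mem_Icc.1 hj).1; linarith)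
    have hS2nn : (0:ℝ) ≤ S2 := Finset.sum_nonneg (fun j hj => by
      have := r_big hc h1 hstep j (Finset.mem_Icc.1 hj).1; positivity)
    have p1 : az * S1 ≤ (3 * r i) * (2 * r i) :=
      mul_le_mul hz2 t1 hS1nn (by linarith)
    have p2 : az^2 * S2 ≤ (9 * (r i)^2) * (2 * (1/10100)) := by
      refine mul_le_mul (by nlinarith) (by linarith) hS2nn (by positivity)
    have key : 72 * az * S1 + 864 * az^2 * S2 ≤ 434 * (r i)^2 := by nlinarith
    calc 72 * az / (c:ℝ)^2 * S1 + 864 * az^2 / (c:ℝ)^2 * S2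
        = (72 * az * S1 + 864 * az^2 * S2) / (c:ℝ)^2 := by ring
      _ ≤ 434 * (r i)^2 / (c:ℝ)^2 := by
          rw [div_le_div_iff₀ hCpos hCpos]
          nlinarith [key, hCpos]
  -- the tail
  have hz8 : ∀ k : ℕ, 8 * Complex.abs z ≤ r (k + (i+1)) := by
    intro k
    have hq := hstep i hi1
    have hmono : r (i+1) ≤ r (k + (i+1)) := r_mono hc h1 hstep (i+1) (k + (i+1)) (by omega) (by omega)
    nlinarith [pow4_ge24 (show (10:ℝ) ≤ r i by linarith)]
  have htail_term : ∀ k : ℕ, g (k + (i+1)) ≤ (15552 / ((c:ℝ)^2 * r i)) * (1/2)^k := by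
    intro k
    have hj1 : 1 ≤ k + (i+1) := by omega
    refine (annulusB hc h1 hstep hx hc1 z hj1 (hz8 k)).trans ?_
    have hq := hstep i hi1
    have htl : 2^k * r (i+1) ≤ r (k + (i+1)) := by
      have := r_tail hc h1 hstep i hi1 k
      rwa [show i+1+k = k+(i+1) by omega] at this
    have h2k : (0:ℝ) < 2^k := by positivity
    have hri1 : (0:ℝ) < r (i+1) := lt_of_lt_of_le (pow_pos hApos 4) hq
    have hprod : (0:ℝ) < 2^k * r (i+1) := by positivity
    have hrj : (0:ℝ) < r (k + (i+1)) := lt_of_lt_of_le hprod htl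
    have hcube := pow_le_pow_left₀ hz0 hz2 3
    have hnum : 576 * (Complex.abs z)^3 ≤ 15552 * (r i)^3 := by nlinarith [hcube]
    have hd1 : 2^k * (r i)^4 ≤ 2^k * r (i+1) := mul_le_mul_of_nonneg_left hq (le_of_lt h2k)
    have hd2 : 2^k * (r i)^4 ≤ r (k + (i+1)) := le_trans hd1 htl
    have hden : (c:ℝ)^2 * (2^k * (r i)^4) ≤ (c:ℝ)^2 * r (k + (i+1)) :=
      mul_le_mul_of_nonneg_left hd2 (le_of_lt hCpos)
    calc 576 * (Complex.abs z)^3 / ((c:ℝ)^2 * r (k + (i+1)))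
        ≤ 15552 * (r i)^3 / ((c:ℝ)^2 * (2^k * (r i)^4)) :=
          div_le_div₀ (by positivity) hnum (by positivity) hden
      _ = (15552 / ((c:ℝ)^2 * r i)) * (1/2)^k := by
          rw [div_pow, one_pow]
          have hc0 : ((c:ℝ)^2) ≠ 0 := by positivity
          have hA0 : r i ≠ 0 := by linarith
          field_simp
  have htailsummable : Summable (fun k : ℕ => g (k + (i+1))) :=
    hgsummable.comp_injective (add_left_injective (i+1))
  have henv : Summable (fun k : ℕ => (15552 / ((c:ℝ)^2 * r i)) * (1/2)^k) :=
    (summable_geometric_of_lt_one (by norm_num) (by norm_num)).mul_left _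
  have htail : ∑' k : ℕ, g (k + (i+1)) ≤ (r i)^2 / (c:ℝ)^2 := by
    refine le_trans (Summable.tsum_le_tsum htail_term htailsummable henv) ?_
    rw [tsum_mul_left, tsum_geometric_of_lt_one (by norm_num) (by norm_num)]
    rw [show ((1:ℝ) - 1/2)⁻¹ = 2 by norm_num]
    have hc3 : (10100:ℝ)^3 ≤ (r i)^3 := pow_le_pow_left₀ (by norm_num) hA 3
    rw [div_mul_eq_mul_div, div_le_div_iff₀ (mul_pos hCpos hApos) hCpos]
    nlinarith [hc3, hCpos, hApos]
  calc ∑ j ∈ Finset.range (i+1), g j + ∑' k : ℕ, g (k + (i+1))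
      ≤ 434 * (r i)^2 / (c:ℝ)^2 + (r i)^2 / (c:ℝ)^2 := by
        rw [hsplit0]; exact add_le_add hfinpart htail
    _ = 435 * (r i)^2 / (c:ℝ)^2 := by ring

end pointfacts
end Stmt6Aux

theorem stmt_6 :
    ∃ K : ℝ, 0 < K ∧
      ∀ c : ℕ, 5 ≤ c →
      ∀ r : ℕ → ℝ, 2020 * (c : ℝ) ≤ r 1 → (∀ i : ℕ, 1 ≤ i → (r i) ^ 4 ≤ r (i + 1)) →
      ∀ x : ℂ → ℂ, (∀ μ, x μ ∈ fundDomain) →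
        (∀ z : ℂ,
          Multipliable (fun μ : annuliLattice c r => wFactor z ((μ : ℂ) + x μ))) ∧
        (∀ i : ℕ, 2 ≤ i → ∀ z : ℂ, r i / 3 ≤ ‖z‖ → ‖z‖ ≤ 3 * r i →
          Real.log ‖∏' μ : annuliLattice c r, wFactor z ((μ : ℂ) + x μ)‖ ≤
            K * (r i) ^ 2 / (c : ℝ) ^ 2) := by
  refine ⟨1000, by norm_num, ?_⟩
  intro c hc r h1 hstep x hx
  have hc1 : 1 ≤ c := by omega
  have hfac : ∀ z lam : ℂ, wFactor z lam ≠ 0 → 1 - z/lam ≠ 0 := by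
    intro z lam h h0
    apply h
    unfold wFactor
    rw [h0, zero_mul]
  have heqz : ∀ z : ℂ, (∀ μ : annuliLattice c r, wFactor z ((μ:ℂ) + x (μ:ℂ)) ≠ 0) →
      (fun μ : annuliLattice c r => wFactor z ((μ:ℂ) + x (μ:ℂ)))
        = fun μ : annuliLattice c r => Complex.exp (Stmt6Aux.Lf x z (μ:ℂ)) := by
    intro z hz
    funext μ
    exact Stmt6Aux.wFactor_eq_cexp (hfac _ _ (hz μ))
  constructor
  · intro z
    by_cases hz : ∃ μ : annuliLattice c r, wFactor z ((μ:ℂ) + x (μ:ℂ)) = 0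
    · exact ⟨0, Stmt6Aux.hasProd_zero_of_exists_eq_zero hz⟩
    · push_neg at hz
      rw [heqz z hz]
      exact ((Stmt6Aux.summable_Lf hc h1 hstep hx hc1 z).hasSum.cexp).multipliable
  · intro i hi z hz1 hz2
    have hi1 : 1 ≤ i := by omega
    have hA : (10100:ℝ) ≤ r i := Stmt6Aux.r_big hc h1 hstep i hi1
    have hCpos : (0:ℝ) < (c:ℝ)^2 := by positivity
    have hRHS : (0:ℝ) ≤ 1000 * (r i)^2 / (c:ℝ)^2 := by positivity
    by_cases hz : ∃ μ : annuliLattice c r, wFactor z ((μ:ℂ) + x (μ:ℂ)) = 0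
    · rw [(Stmt6Aux.hasProd_zero_of_exists_eq_zero hz).tprod_eq]
      simp only [norm_zero, Real.log_zero]
      exact hRHS
    · push_neg at hz
      rw [heqz z hz]
      have hsum := Stmt6Aux.summable_Lf hc h1 hstep hx hc1 z
      rw [show (fun μ : annuliLattice c r => Complex.exp (Stmt6Aux.Lf x z (μ:ℂ)))
          = Complex.exp ∘ (fun μ : annuliLattice c r => Stmt6Aux.Lf x z (μ:ℂ)) from rfl]
      rw [(hsum.hasSum.cexp).tprod_eq]
      rw [Complex.norm_exp, Real.log_exp, Complex.re_tsum hsum]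
      refine le_trans (Stmt6Aux.total_bound hc h1 hstep hx hc1 hi hz1 hz2) ?_
      rw [div_le_div_iff₀ hCpos hCpos]
      nlinarith [sq_nonneg (r i), hCpos]
end

section
/- There exists a constant K > 0 such that for every integer c ≥ 5, every real number r ≥ 2020c, every z ∈ ℂ with (99/200)r ≤ |z| ≤ (101/100)r, and every μ₀ ∈ cΓ satisfying |z - μ₀| ≤ |z - μ| for all μ ∈ cΓ, the finite product ∏_{μ ∈ cΓ, r/2 ≤ |μ| ≤ r, μ ≠ μ₀} |μ - μ₀|/|μ| is at least exp(-K r²/c²). -/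
open Complex Finset Nat

noncomputable def wfun (p : ℤ × ℤ) : ℝ := ‖(p.1 : ℂ) + (p.2 : ℂ) * Complex.I‖

private lemma wfun_nonneg (p : ℤ × ℤ) : 0 ≤ wfun p := norm_nonneg _

private lemma wfun_sq (p : ℤ × ℤ) : wfun p ^ 2 = (p.1 : ℝ) ^ 2 + (p.2 : ℝ) ^ 2 := by
  rw [wfun, Complex.sq_norm, Complex.normSq_apply]
  simp
  ring

private lemma abs_fst_le (p : ℤ × ℤ) : |(p.1 : ℝ)| ≤ wfun p := by
  have h := wfun_sq p
  have h0 := wfun_nonneg p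
  nlinarith [_root_.sq_abs ((p.1:ℝ)), abs_nonneg ((p.1:ℝ)), sq_nonneg ((p.2:ℝ))]

private lemma abs_snd_le (p : ℤ × ℤ) : |(p.2 : ℝ)| ≤ wfun p := by
  have h := wfun_sq p
  have h0 := wfun_nonneg p
  nlinarith [_root_.sq_abs ((p.2:ℝ)), abs_nonneg ((p.2:ℝ)), sq_nonneg ((p.1:ℝ))]

private lemma one_le_wfun {p : ℤ × ℤ} (hp : p ≠ 0) : 1 ≤ wfun p := by
  have h : (1 : ℤ) ≤ p.1 ^ 2 + p.2 ^ 2 := by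
    have : p.1 ≠ 0 ∨ p.2 ≠ 0 := by
      by_contra hx
      push_neg at hx
      exact hp (Prod.ext hx.1 hx.2)
    rcases this with h1 | h2
    · nlinarith [sq_nonneg p.2, Int.one_le_abs h1, _root_.sq_abs p.1, abs_nonneg p.1]
    · nlinarith [sq_nonneg p.1, Int.one_le_abs h2, _root_.sq_abs p.2, abs_nonneg p.2]
  have h' : (1 : ℝ) ≤ (p.1 : ℝ) ^ 2 + (p.2 : ℝ) ^ 2 := by exact_mod_cast h
  nlinarith [wfun_sq p, wfun_nonneg p]

private lemma card_filter_le (T : Finset (ℤ × ℤ)) (t : ℝ) (ht : 1 ≤ t)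
    (hT : ∀ p ∈ T, wfun p ≤ t) : (T.card : ℝ) ≤ 9 * t ^ 2 := by
  set m : ℤ := ⌊t⌋ with hm
  have hm1 : 1 ≤ m := by
    rw [hm]
    exact_mod_cast Int.le_floor.2 (by exact_mod_cast ht)
  have hmt : (m : ℝ) ≤ t := Int.floor_le t
  have hsub : T ⊆ Finset.Icc (-m, -m) (m, m) := by
    intro p hp
    have h1 : |(p.1 : ℝ)| ≤ t := (abs_fst_le p).trans (hT p hp)
    have h2 : |(p.2 : ℝ)| ≤ t := (abs_snd_le p).trans (hT p hp)
    rw [abs_le] at h1 h2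
    rw [Finset.mem_Icc]
    refine ⟨⟨?_, ?_⟩, ?_, ?_⟩
    · have : -p.1 ≤ m := Int.le_floor.2 (by push_cast; linarith)
      omega
    · have : -p.2 ≤ m := Int.le_floor.2 (by push_cast; linarith)
      omega
    · exact Int.le_floor.2 (by push_cast; linarith)
    · exact Int.le_floor.2 (by push_cast; linarith)
  have hcard := Finset.card_le_card hsub
  have hIcc : (Finset.Icc ((-m : ℤ), (-m : ℤ)) (m, m)).card = (2*m+1).toNat * (2*m+1).toNat := by
    rw [Finset.card_Icc_prod, Int.card_Icc]
    show (m + 1 - -m).toNat * (m + 1 - -m).toNat = _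
    congr 2 <;> ring
  have hnn : (0:ℤ) ≤ 2*m+1 := by omega
  have hcast : (((2*m+1).toNat : ℕ) : ℝ) = 2*(m:ℝ)+1 := by
    rw [← Int.cast_natCast, Int.toNat_of_nonneg hnn]
    push_cast; ring
  have hTle : (T.card : ℝ) ≤ (2*(m:ℝ)+1) * (2*(m:ℝ)+1) := by
    rw [← hcast]
    exact_mod_cast hcard.trans_eq (by rw [hIcc])
  have hmr : 2*(m:ℝ)+1 ≤ 3 * t := by linarith
  have hpos : (0:ℝ) ≤ 2*(m:ℝ)+1 := by linarith
  nlinarith [mul_le_mul hmr hmr hpos (by linarith : (0:ℝ) ≤ 3*t)]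

private lemma pow_two_mul_le (x : ℝ) (n : ℕ) : x ^ (2*n) ≤ (n ! : ℝ) * Real.exp (x ^ 2) := by
  have h : (x ^ 2) ^ n / n ! ≤ Real.exp (x ^ 2) := by
    refine le_trans ?_ (Real.sum_le_exp_of_nonneg (sq_nonneg x) (n+1))
    exact Finset.single_le_sum (f := fun i => (x^2)^i / i !)
      (fun i _ => by positivity) (Finset.self_mem_range_succ n)
  have hfact : (0:ℝ) < (n ! : ℝ) := by positivity
  rw [div_le_iff₀ hfact] at h
  calc x ^ (2*n) = (x ^ 2) ^ n := by rw [← pow_mul]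
  _ ≤ (n ! : ℝ) * Real.exp (x ^ 2) := by linarith

private lemma key_prod (T : Finset (ℤ × ℤ)) (hT : ∀ p ∈ T, 1 ≤ wfun p) :
    (T.card ! : ℝ) / 9 ^ T.card ≤ ∏ p ∈ T, wfun p ^ 2 := by
  classical
  set N := T.card with hN
  set k : ℤ × ℤ → ℝ ×ₗ (ℤ ×ₗ ℤ) := fun p => toLex (wfun p, toLex p) with hk
  have kinj : Function.Injective k := by
    intro p q h
    have := congrArg (fun u => ofLex (ofLex u).2) h
    simpa [hk] using this
  set U := T.image k with hUdef
  have hU : U.card = N := by rw [hUdef, Finset.card_image_of_injective _ kinj]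
  set e := U.orderIsoOfFin hU with he
  have hmem : ∀ u ∈ U, ofLex (ofLex u).2 ∈ T ∧ wfun (ofLex (ofLex u).2) = (ofLex u).1
      ∧ k (ofLex (ofLex u).2) = u := by
    intro u hu
    obtain ⟨p, hp, rfl⟩ := Finset.mem_image.1 hu
    exact ⟨hp, rfl, rfl⟩
  have step1 : ∏ p ∈ T, wfun p ^ 2 = ∏ u ∈ U, ((ofLex u).1) ^ 2 := by
    rw [hUdef, Finset.prod_image (fun p _ q _ h => kinj h)]
    rfl
  have step2 : ∏ u ∈ U, ((ofLex u).1) ^ 2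
      = ∏ i : Fin N, ((ofLex (e i : ℝ ×ₗ (ℤ ×ₗ ℤ))).1) ^ 2 := by
    rw [← Finset.prod_coe_sort U (fun u => ((ofLex u).1) ^ 2)]
    exact (Equiv.prod_comp e.toEquiv (fun u : U => ((ofLex (u : ℝ ×ₗ (ℤ ×ₗ ℤ))).1) ^ 2)).symm
  have step3 : ∀ i : Fin N, ((i : ℝ) + 1) / 9 ≤ ((ofLex (e i : ℝ ×ₗ (ℤ ×ₗ ℤ))).1) ^ 2 := by
    intro i
    set u : ℝ ×ₗ (ℤ ×ₗ ℤ) := (e i : ℝ ×ₗ (ℤ ×ₗ ℤ)) with hu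
    have huU : u ∈ U := (e i).2
    set t : ℝ := (ofLex u).1 with htdef
    obtain ⟨hpT, hpw, hpk⟩ := hmem u huU
    have ht1 : 1 ≤ t := by rw [htdef, ← hpw]; exact hT _ hpT
    set V := T.filter (fun p => wfun p ≤ t) with hV
    have hcard1 : (i : ℕ) + 1 ≤ V.card := by
      have hinj : (Finset.Iic i).card ≤ V.card := by
        apply Finset.card_le_card_of_injOn (fun j => ofLex (ofLex (e j : ℝ ×ₗ (ℤ ×ₗ ℤ))).2)
        · intro j hj
          have hj' : j ≤ i := Finset.mem_Iic.1 hj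
          have hle : (e j : ℝ ×ₗ (ℤ ×ₗ ℤ)) ≤ u := Subtype.coe_le_coe.2 (e.monotone hj')
          obtain ⟨hjT, hjw, hjk⟩ := hmem _ (e j).2
          refine Finset.mem_filter.2 ⟨hjT, ?_⟩
          rw [hjw]
          rcases (Prod.Lex.le_iff).1 hle with h | h
          · exact le_of_lt h
          · exact le_of_eq h.1
        · intro j _ j' _ h
          obtain ⟨_, _, hjk⟩ := hmem _ (e j).2
          obtain ⟨_, _, hjk'⟩ := hmem _ (e j').2
          have : (e j : ℝ ×ₗ (ℤ ×ₗ ℤ)) = (e j' : ℝ ×ₗ (ℤ ×ₗ ℤ)) := by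
            rw [← hjk, ← hjk']
            exact congrArg k h
          exact e.injective (Subtype.ext this)
      calc (i : ℕ) + 1 = (Finset.Iic i).card := (Fin.card_Iic i).symm
      _ ≤ V.card := hinj
    have hcard2 : (V.card : ℝ) ≤ 9 * t ^ 2 :=
      card_filter_le V t ht1 (fun p hp => (Finset.mem_filter.1 hp).2)
    have h3 : ((i : ℝ) + 1) ≤ 9 * t ^ 2 := le_trans (by exact_mod_cast hcard1) hcard2
    linarith
  have step4 : ∏ i : Fin N, (((i : ℕ) : ℝ) + 1) / 9
      ≤ ∏ i : Fin N, ((ofLex (e i : ℝ ×ₗ (ℤ ×ₗ ℤ))).1) ^ 2 :=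
    Finset.prod_le_prod (fun i _ => by positivity) (fun i _ => step3 i)
  have step5 : ∏ i : Fin N, (((i : ℕ) : ℝ) + 1) / 9 = (N ! : ℝ) / 9 ^ N := by
    rw [Finset.prod_div_distrib, Finset.prod_const, Finset.card_univ, Fintype.card_fin]
    congr 1
    rw [Fin.prod_univ_eq_prod_range (fun i => ((i : ℝ) + 1)) N]
    rw [← Finset.prod_range_add_one_eq_factorial N]
    push_cast
    rfl
  rw [step1, step2]
  rw [step5] at step4
  exact step4

theorem stmt_8 :
    ∃ K : ℝ, 0 < K ∧
      ∀ c : ℕ, 5 ≤ c →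
      ∀ r : ℝ, 2020 * (c : ℝ) ≤ r →
      ∀ z : ℂ, (99 / 200) * r ≤ ‖z‖ → ‖z‖ ≤ (101 / 100) * r →
      ∀ μ₀ ∈ scaledLattice c,
        (∀ μ ∈ scaledLattice c, ‖z - μ₀‖ ≤ ‖z - μ‖) →
        Set.Finite {μ : ℂ | μ ∈ scaledLattice c ∧ r / 2 ≤ ‖μ‖ ∧
          ‖μ‖ ≤ r ∧ μ ≠ μ₀} ∧
        Real.exp (-K * r ^ 2 / (c : ℝ) ^ 2) ≤
          ∏ᶠ μ ∈ {μ : ℂ | μ ∈ scaledLattice c ∧ r / 2 ≤ ‖μ‖ ∧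
              ‖μ‖ ≤ r ∧ μ ≠ μ₀},
            ‖μ - μ₀‖ / ‖μ‖ := by
  refine ⟨9/2, by norm_num, ?_⟩
  intro c hc r hr z _ _ μ₀ hμ₀ _
  have hc5 : (5 : ℝ) ≤ (c : ℝ) := by exact_mod_cast hc
  have hc0 : (0 : ℝ) < c := by linarith
  have hr0 : (0 : ℝ) < r := by nlinarith
  have hcC : (c : ℂ) ≠ 0 := by
    simpa using (Nat.cast_ne_zero (R := ℂ)).2 (by omega : c ≠ 0)
  obtain ⟨γ, ⟨a₀, b₀, rfl⟩, rfl⟩ := hμ₀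
  set μ₀ : ℂ := (c : ℂ) * ((a₀ : ℂ) + (b₀ : ℂ) * Complex.I) with hμ₀def
  set g : ℤ × ℤ → ℂ := fun p => (c : ℂ) * ((p.1 : ℂ) + (p.2 : ℂ) * Complex.I) with hgdef
  have habs_g : ∀ p, ‖g p‖ = (c : ℝ) * wfun p := by
    intro p
    rw [hgdef]
    simp [wfun, norm_mul, Complex.norm_natCast]
  have gz : ∀ p : ℤ × ℤ, g p = 0 ↔ p = 0 := by
    intro p
    simp only [hgdef]
    constructor
    · intro h'
      rcases mul_eq_zero.1 h' with h | h
      · exact absurd h hcC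
      have h1 : ((p.1 : ℂ) + (p.2 : ℂ) * Complex.I).re = 0 := by rw [h]; simp
      have h2 : ((p.1 : ℂ) + (p.2 : ℂ) * Complex.I).im = 0 := by rw [h]; simp
      simp at h1 h2
      exact Prod.ext (by exact_mod_cast h1) (by exact_mod_cast h2)
    · rintro rfl; simp
  set Tset : Set (ℤ × ℤ) := {p | p ≠ 0 ∧ r / 2 ≤ ‖μ₀ + g p‖ ∧
    ‖μ₀ + g p‖ ≤ r} with hTset
  have hset : {μ : ℂ | μ ∈ scaledLattice c ∧ r / 2 ≤ ‖μ‖ ∧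
      ‖μ‖ ≤ r ∧ μ ≠ μ₀} = (fun p => μ₀ + g p) '' Tset := by
    ext μ
    constructor
    · rintro ⟨⟨γ', ⟨a, b, rfl⟩, rfl⟩, h2, h3, h4⟩
      refine ⟨(a - a₀, b - b₀), ⟨?_, ?_, ?_⟩, ?_⟩
      · intro h0
        simp only [Prod.ext_iff, Prod.fst_zero, Prod.snd_zero] at h0
        exact h4 (by rw [show a = a₀ by omega, show b = b₀ by omega])
      all_goals
        have heq : μ₀ + g (a - a₀, b - b₀) = (c : ℂ) * ((a : ℂ) + (b : ℂ) * Complex.I) := by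
          rw [hμ₀def, hgdef]; push_cast; ring
      · rw [heq]; exact h2
      · rw [heq]; exact h3
      · exact heq
    · rintro ⟨p, ⟨hp0, h2, h3⟩, rfl⟩
      refine ⟨⟨((a₀ + p.1 : ℤ) : ℂ) + ((b₀ + p.2 : ℤ) : ℂ) * Complex.I,
        ⟨a₀ + p.1, b₀ + p.2, rfl⟩, by rw [hμ₀def, hgdef]; push_cast; ring⟩, h2, h3, ?_⟩
      intro h
      apply hp0
      rw [← gz p]
      have := congrArg (fun w => w - μ₀) h
      simpa using this
  have ginj : Function.Injective (fun p : ℤ × ℤ => μ₀ + g p) := by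
    intro p q h
    simp only at h
    have h2 : g p = g q := by
      have := congrArg (fun w => w - μ₀) h
      simpa using this
    rw [hgdef] at h2
    simp only [mul_eq_mul_left_iff, hcC, or_false] at h2
    have h1 : ((p.1 : ℂ) + (p.2 : ℂ) * Complex.I).re = ((q.1 : ℂ) + (q.2 : ℂ) * Complex.I).re := by
      rw [h2]
    have h3 : ((p.1 : ℂ) + (p.2 : ℂ) * Complex.I).im = ((q.1 : ℂ) + (q.2 : ℂ) * Complex.I).im := by
      rw [h2]
    simp at h1 h3
    exact Prod.ext (by exact_mod_cast h1) (by exact_mod_cast h3)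
  have hTfin : Tset.Finite := by
    set B : ℝ := (r + ‖μ₀‖) / c with hB
    set m : ℤ := ⌈B⌉ with hm
    apply Set.Finite.subset (Finset.finite_toSet (Finset.Icc ((-m, -m) : ℤ × ℤ) (m, m)))
    intro p hp
    obtain ⟨hp0, h2, h3⟩ := hp
    have hwb : wfun p ≤ B := by
      rw [hB, le_div_iff₀ hc0]
      have : (c : ℝ) * wfun p = ‖g p‖ := (habs_g p).symm
      rw [mul_comm, this]
      calc ‖g p‖ = ‖(μ₀ + g p) - μ₀‖ := by
            congr 1; ring
      _ ≤ ‖μ₀ + g p‖ + ‖μ₀‖ := by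
            simpa using norm_sub_le (μ₀ + g p) μ₀
      _ ≤ r + ‖μ₀‖ := by linarith
    have h1 : |(p.1 : ℝ)| ≤ B := (abs_fst_le p).trans hwb
    have h2' : |(p.2 : ℝ)| ≤ B := (abs_snd_le p).trans hwb
    rw [abs_le] at h1 h2'
    have hBm : B ≤ (m : ℝ) := Int.le_ceil B
    simp only [Finset.coe_Icc, Set.mem_Icc]
    refine ⟨⟨?_, ?_⟩, ?_, ?_⟩
    · exact_mod_cast (by push_cast; linarith : ((-m : ℤ) : ℝ) ≤ (p.1 : ℝ))
    · exact_mod_cast (by push_cast; linarith : ((-m : ℤ) : ℝ) ≤ (p.2 : ℝ))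
    · exact_mod_cast (by linarith : (p.1 : ℝ) ≤ ((m : ℤ) : ℝ))
    · exact_mod_cast (by linarith : (p.2 : ℝ) ≤ ((m : ℤ) : ℝ))
  have hSfin : Set.Finite {μ : ℂ | μ ∈ scaledLattice c ∧ r / 2 ≤ ‖μ‖ ∧
      ‖μ‖ ≤ r ∧ μ ≠ μ₀} := by
    rw [hset]; exact hTfin.image _
  refine ⟨hSfin, ?_⟩
  rw [finprod_mem_eq_finite_toFinset_prod _ hSfin]
  set Tf := hTfin.toFinset with hTfdef
  have hfin_eq : hSfin.toFinset = Tf.image (fun p => μ₀ + g p) := by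
    apply Finset.coe_injective
    rw [Set.Finite.coe_toFinset, Finset.coe_image, Set.Finite.coe_toFinset, hset]
  rw [hfin_eq, Finset.prod_image (fun p _ q _ h => ginj h)]
  have hratio : ∀ p ∈ Tf, ‖μ₀ + g p - μ₀‖ / ‖μ₀ + g p‖
      = ((c : ℝ) * wfun p) / ‖μ₀ + g p‖ := by
    intro p _
    rw [show μ₀ + g p - μ₀ = g p by ring, habs_g]
  rw [Finset.prod_congr rfl hratio]
  -- main chain
  have hmemT : ∀ p ∈ Tf, p ≠ 0 ∧ r / 2 ≤ ‖μ₀ + g p‖ ∧ ‖μ₀ + g p‖ ≤ r :=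
    fun p hp => hTfin.mem_toFinset.1 hp
  set N := Tf.card with hN
  set W := ∏ p ∈ Tf, wfun p with hW
  have hW0 : 0 ≤ W := Finset.prod_nonneg (fun p _ => wfun_nonneg p)
  have hPge : ((c : ℝ)/r)^N * W ≤ ∏ p ∈ Tf, ((c : ℝ) * wfun p) / ‖μ₀ + g p‖ := by
    have : ((c : ℝ)/r)^N * W = ∏ p ∈ Tf, ((c : ℝ)/r) * wfun p := by
      rw [Finset.prod_mul_distrib, Finset.prod_const, hW, hN]
    rw [this]
    apply Finset.prod_le_prod
    · intro p hp
      have := wfun_nonneg p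
      positivity
    · intro p hp
      obtain ⟨_, h2, h3⟩ := hmemT p hp
      have habs0 : 0 < ‖μ₀ + g p‖ := by linarith
      have hwp := wfun_nonneg p
      rw [div_mul_eq_mul_div]
      gcongr
  refine le_trans ?_ hPge
  set x : ℝ := 3 * r / (c : ℝ) with hx
  have hx0 : 0 < x := by positivity
  have hWsq : (N ! : ℝ) / 9 ^ N ≤ W ^ 2 := by
    rw [hW, ← Finset.prod_pow]
    exact key_prod Tf (fun p hp => one_le_wfun (hmemT p hp).1)
  have hA := pow_two_mul_le x N
  have hfa : (0:ℝ) < (N ! : ℝ) := by positivity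
  have hxpow : (0:ℝ) < x ^ (2*N) := pow_pos hx0 _
  have h3 : ((c:ℝ)/r)^(2*N) * x^(2*N) = 9 ^ N := by
    rw [← mul_pow]
    have hcx : (c:ℝ)/r * x = 3 := by
      rw [hx]; field_simp
    rw [hcx, pow_mul]; norm_num
  have hQ : Real.exp (-(x^2)) ≤ (((c:ℝ)/r)^N * W)^2 := by
    have e1 : (((c:ℝ)/r)^N * W)^2 = ((c:ℝ)/r)^(2*N) * W^2 := by
      rw [mul_pow, ← pow_mul, mul_comm N 2]
    rw [e1]
    have hcr : ((c:ℝ)/r)^(2*N) = 9^N / x^(2*N) := by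
      rw [eq_div_iff hxpow.ne']; exact h3
    rw [hcr, div_mul_eq_mul_div, le_div_iff₀ hxpow]
    have h4 : Real.exp (-(x^2)) * x^(2*N) ≤ (N ! : ℝ) := by
      have h5 := mul_le_mul_of_nonneg_left hA (Real.exp_nonneg (-(x^2)))
      have h6 : Real.exp (-(x^2)) * ((N ! : ℝ) * Real.exp (x^2)) = (N ! : ℝ) := by
        rw [Real.exp_neg]
        field_simp
      linarith
    have h7 : (N ! : ℝ) ≤ 9^N * W^2 := by
      rw [div_le_iff₀ (by positivity : (0:ℝ) < (9:ℝ)^N)] at hWsq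
      linarith
    linarith
  have hQ0 : (0:ℝ) ≤ ((c:ℝ)/r)^N * W :=
    mul_nonneg (pow_nonneg (div_nonneg hc0.le hr0.le) N) hW0
  have hxx : x^2 = 9 * r^2 / (c:ℝ)^2 := by
    rw [hx]; field_simp; ring
  have hE : Real.exp (-(9/2) * r^2 / (c:ℝ)^2) ^ 2 = Real.exp (-(x^2)) := by
    rw [sq, ← Real.exp_add]
    congr 1
    rw [hxx]; ring
  nlinarith [Real.exp_pos (-(9/2) * r^2 / (c:ℝ)^2), hQ, hQ0, hE]
end

section
/- For every positive integer c and every real number ρ > 0 such that n := ⌊ρ/c⌋ ≥ 1, the finite product ∏ |μ'|, taken over all nonzero μ' ∈ cΓ whose real and imaginary parts both have absolute value at most ρ, is at least (n! · cⁿ)^{4n+4}. -/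
open Complex

lemma aux_prod_Icc (n : ℕ) : ∏ b ∈ Finset.Icc (1:ℤ) (n:ℤ), (b:ℝ) = n.factorial := by
  induction n with
  | zero => simp
  | succ k ih =>
    have h : ((k+1:ℕ):ℤ) = (k:ℤ) + 1 := by push_cast; ring
    have hins : Finset.Icc (1:ℤ) ((k:ℤ)+1) = insert ((k:ℤ)+1) (Finset.Icc 1 (k:ℤ)) := by
      ext x; simp only [Finset.mem_Icc, Finset.mem_insert]; omega
    have hnm : ((k:ℤ)+1) ∉ Finset.Icc (1:ℤ) (k:ℤ) := by
      simp only [Finset.mem_Icc]; omega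
    rw [h, hins, Finset.prod_insert hnm, ih]
    push_cast [Nat.factorial_succ]; ring

lemma aux_row (c n : ℕ) :
    ∏ b ∈ (Finset.Icc (-(n:ℤ)) (n:ℤ)).erase 0, ((c:ℝ) * |(b:ℝ)|)
      = ((n.factorial : ℝ) * (c:ℝ) ^ n) ^ 2 := by
  have hsplit : (Finset.Icc (-(n:ℤ)) (n:ℤ)).erase 0
      = (Finset.Icc (-(n:ℤ)) (-1)) ∪ (Finset.Icc (1:ℤ) (n:ℤ)) := by
    ext x
    simp only [Finset.mem_erase, Finset.mem_Icc, Finset.mem_union]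
    omega
  have hdisj : Disjoint (Finset.Icc (-(n:ℤ)) (-1)) (Finset.Icc (1:ℤ) (n:ℤ)) := by
    rw [Finset.disjoint_left]
    intro x hx hx'
    simp only [Finset.mem_Icc] at hx hx'
    omega
  have hneg : Finset.Icc (-(n:ℤ)) (-1) = (Finset.Icc (1:ℤ) (n:ℤ)).image Neg.neg := by
    ext x
    simp only [Finset.mem_Icc, Finset.mem_image]
    constructor
    · intro hx; exact ⟨-x, by omega, by omega⟩
    · rintro ⟨y, hy, rfl⟩; omega
  have hpos : ∏ b ∈ Finset.Icc (1:ℤ) (n:ℤ), ((c:ℝ) * |(b:ℝ)|)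
      = (n.factorial : ℝ) * (c:ℝ)^n := by
    rw [Finset.prod_mul_distrib, Finset.prod_const]
    have hcard : (Finset.Icc (1:ℤ) (n:ℤ)).card = n := by
      rw [Int.card_Icc]; omega
    have habs : ∏ b ∈ Finset.Icc (1:ℤ) (n:ℤ), |(b:ℝ)|
        = ∏ b ∈ Finset.Icc (1:ℤ) (n:ℤ), (b:ℝ) := by
      apply Finset.prod_congr rfl
      intro b hb
      simp only [Finset.mem_Icc] at hb
      have : (0:ℝ) < (b:ℝ) := by exact_mod_cast (by omega : (0:ℤ) < b)
      rw [abs_of_pos this]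
    rw [hcard, habs, aux_prod_Icc]
    ring
  rw [hsplit, Finset.prod_union hdisj, hneg,
    Finset.prod_image (fun x _ y _ h => neg_injective h)]
  simp only [Int.cast_neg, abs_neg]
  rw [hpos]; ring

theorem stmt_9 (c : ℕ) (hc : 0 < c) (ρ : ℝ) (hρ : 0 < ρ)
    (n : ℕ) (hn : n = ⌊ρ / (c : ℝ)⌋₊) (hn1 : 1 ≤ n) :
    Set.Finite {μ : ℂ | μ ∈ scaledLattice c ∧ μ ≠ 0 ∧ |μ.re| ≤ ρ ∧ |μ.im| ≤ ρ} ∧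
    ((n.factorial : ℝ) * (c : ℝ) ^ n) ^ (4 * n + 4) ≤
      ∏ᶠ μ ∈ {μ : ℂ | μ ∈ scaledLattice c ∧ μ ≠ 0 ∧ |μ.re| ≤ ρ ∧ |μ.im| ≤ ρ},
        ‖μ‖ := by
  have hcR : (0:ℝ) < c := by exact_mod_cast hc
  set R : Finset ℤ := Finset.Icc (-(n:ℤ)) (n:ℤ) with hR
  set F : Finset (ℤ×ℤ) := (R ×ˢ R).erase (0,0) with hF
  set f : ℤ×ℤ → ℂ := fun p => (c:ℂ) * ((p.1:ℂ) + (p.2:ℂ)*Complex.I) with hf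
  have hre : ∀ p : ℤ×ℤ, (f p).re = (c:ℝ) * (p.1:ℝ) := by intro p; simp [hf]
  have him : ∀ p : ℤ×ℤ, (f p).im = (c:ℝ) * (p.2:ℝ) := by intro p; simp [hf]
  have hbound : ∀ a : ℤ, |(c:ℝ) * (a:ℝ)| ≤ ρ ↔ (-(n:ℤ) ≤ a ∧ a ≤ (n:ℤ)) := by
    intro a
    have h1 : |(c:ℝ) * (a:ℝ)| = (c:ℝ) * (a.natAbs : ℝ) := by
      rw [abs_mul, abs_of_pos hcR]
      congr 1
      rw [Nat.cast_natAbs]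
      push_cast
      rfl
    rw [h1, mul_comm, ← le_div_iff₀ hcR,
      ← Nat.le_floor_iff (le_of_lt (div_pos hρ hcR)), ← hn]
    omega
  have hf0 : ∀ p : ℤ×ℤ, f p = 0 ↔ p = (0,0) := by
    intro p
    constructor
    · intro h
      have h1 : (f p).re = 0 := by rw [h]; simp
      have h2 : (f p).im = 0 := by rw [h]; simp
      rw [hre] at h1
      rw [him] at h2
      have e1 : (p.1:ℝ) = 0 := by
        rcases mul_eq_zero.1 h1 with h | h
        · exact absurd h (ne_of_gt hcR)
        · exact h
      have e2 : (p.2:ℝ) = 0 := by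
        rcases mul_eq_zero.1 h2 with h | h
        · exact absurd h (ne_of_gt hcR)
        · exact h
      have e1' : p.1 = 0 := by exact_mod_cast e1
      have e2' : p.2 = 0 := by exact_mod_cast e2
      exact Prod.ext e1' e2'
    · rintro rfl; simp [hf]
  have hSet : {μ : ℂ | μ ∈ scaledLattice c ∧ μ ≠ 0 ∧ |μ.re| ≤ ρ ∧ |μ.im| ≤ ρ}
      = ↑(F.image f) := by
    ext μ
    simp only [Set.mem_setOf_eq, Finset.coe_image, Set.mem_image, Finset.mem_coe]
    constructor
    · rintro ⟨hμ, hne, hreb, himb⟩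
      obtain ⟨γ, ⟨a, b, rfl⟩, rfl⟩ := hμ
      have hfa : (c:ℂ) * ((a:ℂ) + (b:ℂ)*Complex.I) = f (a,b) := rfl
      rw [hfa] at hreb himb hne ⊢
      rw [hre] at hreb
      rw [him] at himb
      refine ⟨(a,b), ?_, rfl⟩
      rw [hF, Finset.mem_erase, Finset.mem_product, hR]
      refine ⟨fun h => hne ((hf0 (a,b)).2 h), ?_, ?_⟩
      · exact Finset.mem_Icc.2 ((hbound a).1 hreb)
      · exact Finset.mem_Icc.2 ((hbound b).1 himb)
    · rintro ⟨p, hp, rfl⟩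
      rw [hF, Finset.mem_erase, Finset.mem_product, hR] at hp
      obtain ⟨hp0, hp1, hp2⟩ := hp
      refine ⟨⟨(p.1:ℂ)+(p.2:ℂ)*Complex.I, ⟨p.1, p.2, rfl⟩, rfl⟩, ?_, ?_, ?_⟩
      · exact fun h => hp0 ((hf0 p).1 h)
      · rw [hre]; exact (hbound p.1).2 (Finset.mem_Icc.1 hp1)
      · rw [him]; exact (hbound p.2).2 (Finset.mem_Icc.1 hp2)
  have hinj : ∀ p ∈ F, ∀ q ∈ F, f p = f q → p = q := by
    intro p _ q _ h
    have h1 : (f p).re = (f q).re := by rw [h]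
    have h2 : (f p).im = (f q).im := by rw [h]
    rw [hre, hre] at h1
    rw [him, him] at h2
    have e1 : p.1 = q.1 := by
      have := mul_left_cancel₀ (ne_of_gt hcR) h1
      exact_mod_cast this
    have e2 : p.2 = q.2 := by
      have := mul_left_cancel₀ (ne_of_gt hcR) h2
      exact_mod_cast this
    exact Prod.ext e1 e2
  refine ⟨hSet ▸ (F.image f).finite_toSet, ?_⟩
  rw [hSet, finprod_mem_coe_finset, Finset.prod_image hinj]
  -- the comparison function
  set g : ℤ×ℤ → ℝ := fun p =>
    if p = (0,0) then 1
    else if p.2 = 0 then (c:ℝ)*|(p.1:ℝ)| else (c:ℝ)*|(p.2:ℝ)| with hg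
  have hgnn : ∀ p : ℤ×ℤ, 0 ≤ g p := by
    intro p
    rw [hg]
    dsimp only
    split
    · norm_num
    · split <;> positivity
  have hgle : ∀ p ∈ F, g p ≤ ‖f p‖ := by
    intro p hp
    have hp0 : p ≠ (0,0) := (Finset.mem_erase.1 hp).1
    have habs : ‖f p‖ = (c:ℝ) * ‖(p.1:ℂ) + (p.2:ℂ)*Complex.I‖ := by
      rw [hf]
      dsimp only
      rw [norm_mul]
      congr 1
      simp
    have hz1 : |(p.1:ℝ)| ≤ ‖(p.1:ℂ) + (p.2:ℂ)*Complex.I‖ := by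
      have := Complex.abs_re_le_norm ((p.1:ℂ) + (p.2:ℂ)*Complex.I)
      simpa using this
    have hz2 : |(p.2:ℝ)| ≤ ‖(p.1:ℂ) + (p.2:ℂ)*Complex.I‖ := by
      have := Complex.abs_im_le_norm ((p.1:ℂ) + (p.2:ℂ)*Complex.I)
      simpa using this
    rw [hg, habs]
    dsimp only
    rw [if_neg hp0]
    split
    · exact mul_le_mul_of_nonneg_left hz1 (le_of_lt hcR)
    · exact mul_le_mul_of_nonneg_left hz2 (le_of_lt hcR)
  have hstep : ∏ p ∈ F, g p ≤ ∏ p ∈ F, ‖f p‖ :=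
    Finset.prod_le_prod (fun p _ => hgnn p) hgle
  have h0R : (0:ℤ) ∈ R := by
    rw [hR, Finset.mem_Icc]; omega
  have h00 : ((0:ℤ),(0:ℤ)) ∈ R ×ˢ R := Finset.mem_product.2 ⟨h0R, h0R⟩
  have hFP : ∏ p ∈ R ×ˢ R, g p = ∏ p ∈ F, g p := by
    rw [hF, ← Finset.mul_prod_erase _ _ h00]
    have : g ((0:ℤ),(0:ℤ)) = 1 := by simp [hg]
    rw [this, one_mul]
  set K : ℝ := ((n.factorial : ℝ) * (c:ℝ) ^ n) ^ 2 with hK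
  have hrow : ∀ a : ℤ, ∏ b ∈ R, g (a, b)
      = (if a = 0 then 1 else (c:ℝ)*|(a:ℝ)|) * K := by
    intro a
    rw [← Finset.mul_prod_erase _ _ h0R]
    have h1 : g (a, 0) = if a = 0 then 1 else (c:ℝ)*|(a:ℝ)| := by
      by_cases h : a = 0
      · subst h; rw [hg]; simp
      · rw [hg]
        dsimp only
        rw [if_neg (by simp [Prod.ext_iff, h]), if_pos rfl, if_neg h]
    rw [h1]
    congr 1
    rw [hK, ← aux_row c n, hR]
    apply Finset.prod_congr rfl
    intro b hb
    have hb0 : b ≠ 0 := (Finset.mem_erase.1 hb).1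
    rw [hg]
    dsimp only
    rw [if_neg (by simp [Prod.ext_iff, hb0]), if_neg hb0]
  have hcard : R.card = 2*n+1 := by
    rw [hR, Int.card_Icc]; omega
  have hprode : ∏ a ∈ R, (if a = 0 then (1:ℝ) else (c:ℝ)*|(a:ℝ)|) = K := by
    rw [← Finset.mul_prod_erase _ _ h0R, if_pos rfl, one_mul, hK, ← aux_row c n, hR]
    apply Finset.prod_congr rfl
    intro a ha
    rw [if_neg (Finset.mem_erase.1 ha).1]
  have houter : ∏ p ∈ R ×ˢ R, g p
      = ((n.factorial : ℝ) * (c:ℝ) ^ n) ^ (4*n+4) := by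
    rw [Finset.prod_product]
    calc ∏ a ∈ R, ∏ b ∈ R, g (a, b)
        = ∏ a ∈ R, ((if a = 0 then 1 else (c:ℝ)*|(a:ℝ)|) * K) :=
          Finset.prod_congr rfl (fun a _ => hrow a)
      _ = (∏ a ∈ R, (if a = 0 then (1:ℝ) else (c:ℝ)*|(a:ℝ)|)) * K ^ R.card := by
          rw [Finset.prod_mul_distrib, Finset.prod_const]
      _ = K * K ^ (2*n+1) := by rw [hprode, hcard]
      _ = K ^ (2*n+2) := by rw [← pow_succ']
      _ = ((n.factorial : ℝ) * (c:ℝ) ^ n) ^ (4*n+4) := by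
          rw [hK, ← pow_mul]
          congr 1
          ring
  calc ((n.factorial : ℝ) * (c : ℝ) ^ n) ^ (4 * n + 4)
      = ∏ p ∈ R ×ˢ R, g p := houter.symm
    _ = ∏ p ∈ F, g p := hFP
    _ ≤ ∏ p ∈ F, ‖f p‖ := hstep
end

section
/- There exists a constant K > 0 with the following property. For every integer c ≥ 5, every sequence of radii (r_i)_{i≥1} with r₁ ≥ 2020c and r_{i+1} ≥ r_i⁴, and every function x : ⋃_{i≥1}(A_{r_i} ∩ cΓ) → 𝒟, for every i ≥ 1 and every z ∈ ℂ with |z| ≤ 3r_i one has Σ_{ℓ ≥ i+1} Σ_{μ ∈ A_{r_ℓ} ∩ cΓ} |z/(μ + x(μ))|³ ≤ K/c². -/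
open Complex

lemma xabs_le_two {w : ℂ} (hw : w ∈ fundDomain) : ‖w‖ ≤ 2 := by
  obtain ⟨h1, h2, h3, h4⟩ := hw
  calc ‖w‖ ≤ |w.re| + |w.im| := Complex.norm_le_abs_re_add_abs_im w
  _ ≤ 1 + 1 := by
      rw [_root_.abs_of_nonneg h1, _root_.abs_of_nonneg h3]
      exact add_le_add h2.le h4.le
  _ = 2 := by norm_num

lemma annulus_subset (c : ℕ) (hc : 1 ≤ c) (R : ℝ) :
    {μ : ℂ | μ ∈ scaledLattice c ∧ R / 2 ≤ ‖μ‖ ∧ ‖μ‖ ≤ R} ⊆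
      ↑(((Finset.Icc (-⌊R / c⌋) ⌊R / c⌋) ×ˢ (Finset.Icc (-⌊R / c⌋) ⌊R / c⌋)).image
        (fun p : ℤ × ℤ => (c : ℂ) * ((p.1 : ℂ) + (p.2 : ℂ) * Complex.I))) := by
  rintro μ ⟨⟨γ, ⟨a, b, rfl⟩, rfl⟩, _, habs⟩
  have hc0 : (0:ℝ) ≤ (c:ℝ) := Nat.cast_nonneg c
  have hcpos : (0:ℝ) < c := by exact_mod_cast hc
  have hre : (((c:ℂ) * ((a:ℂ) + (b:ℂ) * Complex.I)).re) = (c:ℝ) * a := by simp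
  have him : (((c:ℂ) * ((a:ℂ) + (b:ℂ) * Complex.I)).im) = (c:ℝ) * b := by simp
  have h1 : |(c:ℝ) * a| ≤ R := by
    rw [← hre]; exact (Complex.abs_re_le_norm _).trans habs
  have h2 : |(c:ℝ) * b| ≤ R := by
    rw [← him]; exact (Complex.abs_im_le_norm _).trans habs
  have ha : |(a:ℝ)| ≤ R / c := by
    rw [le_div_iff₀ hcpos, mul_comm]
    rwa [abs_mul, _root_.abs_of_nonneg hc0] at h1
  have hb : |(b:ℝ)| ≤ R / c := by
    rw [le_div_iff₀ hcpos, mul_comm]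
    rwa [abs_mul, _root_.abs_of_nonneg hc0] at h2
  simp only [Finset.coe_image, Set.mem_image, Finset.mem_coe, Finset.mem_product,
    Finset.mem_Icc]
  rw [abs_le] at ha hb
  refine ⟨(a, b), ⟨⟨?_, ?_⟩, ?_, ?_⟩, rfl⟩ <;> simp only [neg_le, Int.le_floor] <;> push_cast
  · linarith [ha.1]
  · exact ha.2
  · linarith [hb.1]
  · exact hb.2

lemma annulus_finite (c : ℕ) (hc : 1 ≤ c) (R : ℝ) :
    ({μ : ℂ | μ ∈ scaledLattice c ∧ R / 2 ≤ ‖μ‖ ∧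
        ‖μ‖ ≤ R}).Finite :=
  Set.Finite.subset (Finset.finite_toSet _) (annulus_subset c hc R)

lemma annulus_sum_le (c : ℕ) (hc : 1 ≤ c) (R : ℝ) (hR : (c:ℝ) ≤ R)
    (f : ℂ → ℝ) (hf0 : ∀ μ, 0 ≤ f μ) (B : ℝ) (hB : 0 ≤ B)
    (hfB : ∀ μ ∈ {μ : ℂ | μ ∈ scaledLattice c ∧ R / 2 ≤ ‖μ‖ ∧
        ‖μ‖ ≤ R}, f μ ≤ B) :
    (∑ᶠ μ ∈ {μ : ℂ | μ ∈ scaledLattice c ∧ R / 2 ≤ ‖μ‖ ∧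
        ‖μ‖ ≤ R}, f μ) ≤ 9 * R ^ 2 / (c:ℝ) ^ 2 * B := by
  have hcpos : (0:ℝ) < c := by exact_mod_cast hc
  have hRc : (1:ℝ) ≤ R / c := (one_le_div hcpos).2 hR
  set N : ℤ := ⌊R / c⌋ with hN
  have hN0 : (1:ℤ) ≤ N := Int.le_floor.2 (by exact_mod_cast hRc)
  have hNle : (N:ℝ) ≤ R / c := Int.floor_le _
  set T : Finset ℂ := ((Finset.Icc (-N) N) ×ˢ (Finset.Icc (-N) N)).image
      (fun p : ℤ × ℤ => (c : ℂ) * ((p.1 : ℂ) + (p.2 : ℂ) * Complex.I)) with hT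
  have hfin := annulus_finite c hc R
  rw [finsum_mem_eq_finite_toFinset_sum f hfin]
  have hsub : hfin.toFinset ⊆ T := by
    intro μ hμ
    exact annulus_subset c hc R (hfin.mem_toFinset.1 hμ)
  have hcard : (T.card : ℝ) ≤ 9 * R ^ 2 / (c:ℝ) ^ 2 := by
    have h1 : T.card ≤ ((2 * N + 1).toNat) ^ 2 := by
      calc T.card ≤ ((Finset.Icc (-N) N) ×ˢ (Finset.Icc (-N) N)).card :=
            Finset.card_image_le
      _ = ((2 * N + 1).toNat) ^ 2 := by
            rw [Finset.card_product, Int.card_Icc]; ring_nf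
    have h2 : (((2 * N + 1).toNat : ℝ)) ≤ 3 * (R / c) := by
      have h3 : (((2 * N + 1).toNat : ℝ)) = 2 * (N:ℝ) + 1 := by
        exact_mod_cast congrArg (fun z : ℤ => (z:ℝ))
          (Int.toNat_of_nonneg (show (0:ℤ) ≤ 2*N+1 by omega))
      rw [h3]; linarith
    calc (T.card : ℝ) ≤ (((2 * N + 1).toNat : ℝ)) ^ 2 := by exact_mod_cast h1
    _ ≤ (3 * (R / c)) ^ 2 := by
        apply pow_le_pow_left₀ (by positivity) h2
    _ = 9 * R ^ 2 / (c:ℝ) ^ 2 := by field_simp; ring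
  calc ∑ μ ∈ hfin.toFinset, f μ ≤ hfin.toFinset.card • B :=
        Finset.sum_le_card_nsmul _ f B (fun μ hμ => hfB μ (hfin.mem_toFinset.1 hμ))
  _ = (hfin.toFinset.card : ℝ) * B := nsmul_eq_mul _ _
  _ ≤ (T.card : ℝ) * B := by
        apply mul_le_mul_of_nonneg_right _ hB
        exact_mod_cast Finset.card_le_card hsub
  _ ≤ 9 * R ^ 2 / (c:ℝ) ^ 2 * B := mul_le_mul_of_nonneg_right hcard hB

theorem stmt_12 :
    ∃ K : ℝ, 0 < K ∧
      ∀ c : ℕ, 5 ≤ c →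
      ∀ r : ℕ → ℝ, 2020 * (c : ℝ) ≤ r 1 → (∀ i : ℕ, 1 ≤ i → (r i) ^ 4 ≤ r (i + 1)) →
      ∀ x : ℂ → ℂ, (∀ μ, x μ ∈ fundDomain) →
      ∀ i : ℕ, 1 ≤ i →
      ∀ z : ℂ, ‖z‖ ≤ 3 * r i →
        Summable (fun ℓ : ℕ => if i + 1 ≤ ℓ then
          (∑ᶠ μ ∈ {μ : ℂ | μ ∈ scaledLattice c ∧ r ℓ / 2 ≤ ‖μ‖ ∧
              ‖μ‖ ≤ r ℓ}, ‖z / (μ + x μ)‖ ^ 3) else 0) ∧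
        (∑' ℓ : ℕ, if i + 1 ≤ ℓ then
          (∑ᶠ μ ∈ {μ : ℂ | μ ∈ scaledLattice c ∧ r ℓ / 2 ≤ ‖μ‖ ∧
              ‖μ‖ ≤ r ℓ}, ‖z / (μ + x μ)‖ ^ 3) else 0) ≤
          K / (c : ℝ) ^ 2 := by
  refine ⟨13122, by norm_num, ?_⟩
  intro c hc r hr1 hrgrow x hx i hi z hz
  have hc1 : 1 ≤ c := le_trans (by norm_num) hc
  have hcR : (1:ℝ) ≤ (c:ℝ) := by exact_mod_cast hc1
  have hc2 : (0:ℝ) < (c:ℝ) ^ 2 := by positivity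
  -- all radii are at least 2020 c
  have hrge : ∀ ℓ, 1 ≤ ℓ → 2020 * (c:ℝ) ≤ r ℓ := by
    intro ℓ hℓ
    induction ℓ, hℓ using Nat.le_induction with
    | base => exact hr1
    | succ n hn ih =>
      have h1 : (1:ℝ) ≤ r n := by nlinarith
      calc 2020 * (c:ℝ) ≤ r n := ih
      _ ≤ r n ^ 4 := le_self_pow₀ (by linarith) (by norm_num)
      _ ≤ r (n + 1) := hrgrow n hn
  have hri : (2:ℝ) ≤ r i := by have := hrge i hi; nlinarith
  have hri0 : (0:ℝ) < r i := by linarith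
  -- growth estimate
  have hgrow : ∀ ℓ, i + 1 ≤ ℓ → r i ^ 3 * 2 ^ (ℓ - (i + 1)) ≤ r ℓ := by
    intro ℓ hℓ
    induction ℓ, hℓ using Nat.le_induction with
    | base =>
      simp only [Nat.sub_self, pow_zero, mul_one]
      calc r i ^ 3 = r i ^ 3 * 1 := by ring
      _ ≤ r i ^ 3 * r i := mul_le_mul_of_nonneg_left (by linarith) (by positivity)
      _ = r i ^ 4 := by ring
      _ ≤ r (i + 1) := hrgrow i hi
    | succ n hn ih =>
      have hn1 : 1 ≤ n := le_trans (Nat.le_add_left 1 i) hn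
      have h2 : (2:ℝ) ≤ r n := by have := hrge n hn1; nlinarith
      have h8 : (2:ℝ) ≤ r n ^ 3 := by nlinarith [sq_nonneg (r n), mul_pos (show (0:ℝ) < r n by linarith) (show (0:ℝ) < r n by linarith)]
      have h4 : 2 * r n ≤ r n ^ 4 := by
        calc 2 * r n ≤ r n ^ 3 * r n := mul_le_mul_of_nonneg_right h8 (by linarith)
        _ = r n ^ 4 := by ring
      have he : n + 1 - (i + 1) = (n - (i + 1)) + 1 := by omega
      rw [he, pow_succ]
      calc r i ^ 3 * (2 ^ (n - (i + 1)) * 2) = 2 * (r i ^ 3 * 2 ^ (n - (i + 1))) := by ring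
      _ ≤ 2 * r n := by nlinarith [ih]
      _ ≤ r n ^ 4 := h4
      _ ≤ r (n + 1) := hrgrow n hn1
  set F : ℂ → ℝ := fun μ => (‖z / (μ + x μ)‖) ^ 3 with hF
  have hF0 : ∀ μ, 0 ≤ F μ := fun μ => by positivity
  set g : ℕ → ℝ := fun ℓ => if i + 1 ≤ ℓ then
      (∑ᶠ μ ∈ {μ : ℂ | μ ∈ scaledLattice c ∧ r ℓ / 2 ≤ ‖μ‖ ∧
          ‖μ‖ ≤ r ℓ}, F μ) else 0 with hg
  set C : ℝ := 6561 / (c:ℝ) ^ 2 with hC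
  set h : ℕ → ℝ := fun ℓ => if i + 1 ≤ ℓ then C * (1 / 2) ^ (ℓ - (i + 1)) else 0 with hh
  -- key annulus bound
  have key : ∀ ℓ, i + 1 ≤ ℓ → g ℓ ≤ h ℓ := by
    intro ℓ hℓ
    have hℓ1 : 1 ≤ ℓ := le_trans (Nat.le_add_left 1 i) hℓ
    have hrℓ : 2020 * (c:ℝ) ≤ r ℓ := hrge ℓ hℓ1
    have hrℓ0 : (0:ℝ) < r ℓ := by nlinarith
    have hrℓ12 : (12:ℝ) ≤ r ℓ := by nlinarith
    have hB0 : (0:ℝ) ≤ (9 * r i / r ℓ) ^ 3 := by positivity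
    have hfB : ∀ μ ∈ {μ : ℂ | μ ∈ scaledLattice c ∧ r ℓ / 2 ≤ ‖μ‖ ∧
        ‖μ‖ ≤ r ℓ}, F μ ≤ (9 * r i / r ℓ) ^ 3 := by
      rintro μ ⟨hμ1, hμ2, hμ3⟩
      have hxμ : ‖x μ‖ ≤ 2 := xabs_le_two (hx μ)
      have hlow : r ℓ / 3 ≤ ‖μ + x μ‖ := by
        have htri : ‖μ‖ - ‖x μ‖ ≤ ‖μ + x μ‖ := by
          have h := norm_add_le (μ + x μ) (-(x μ))
          simp only [add_neg_cancel_right, norm_neg] at h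
          linarith
        linarith
      have hpos : (0:ℝ) < ‖μ + x μ‖ := by linarith
      have hdiv : ‖z / (μ + x μ)‖ ≤ 9 * r i / r ℓ := by
        rw [norm_div]
        calc ‖z‖ / ‖μ + x μ‖ ≤ 3 * r i / (r ℓ / 3) := by
              exact div_le_div₀ (by positivity) hz (by positivity) hlow
        _ = 9 * r i / r ℓ := by field_simp; ring
      calc F μ = (‖z / (μ + x μ)‖) ^ 3 := rfl
      _ ≤ (9 * r i / r ℓ) ^ 3 := pow_le_pow_left₀ (by positivity) hdiv 3
    have hsum := annulus_sum_le c hc1 (r ℓ) (by nlinarith) F hF0 _ hB0 hfB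
    have heq : (9:ℝ) * r ℓ ^ 2 / (c:ℝ) ^ 2 * (9 * r i / r ℓ) ^ 3 =
        6561 * r i ^ 3 / ((c:ℝ) ^ 2 * r ℓ) := by
      field_simp
      ring
    have hfinal : 6561 * r i ^ 3 / ((c:ℝ) ^ 2 * r ℓ) ≤ C * (1 / 2) ^ (ℓ - (i + 1)) := by
      set t : ℝ := 2 ^ (ℓ - (i + 1)) with ht
      have ht0 : (0:ℝ) < t := by positivity
      have hgr : r i ^ 3 * t ≤ r ℓ := hgrow ℓ hℓ
      have h12 : ((1:ℝ) / 2) ^ (ℓ - (i + 1)) = 1 / t := by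
        rw [ht, div_pow, one_pow]
      have hr2 : 6561 / (c:ℝ) ^ 2 * (1 / t) = 6561 / ((c:ℝ) ^ 2 * t) := by
        rw [div_mul_div_comm, mul_one]
      rw [h12, hC, hr2, div_le_div_iff₀ (by positivity) (by positivity)]
      nlinarith [mul_le_mul_of_nonneg_left hgr (show (0:ℝ) ≤ 6561 * (c:ℝ) ^ 2 by positivity)]
    simp only [hg, hh, if_pos hℓ]
    calc (∑ᶠ μ ∈ {μ : ℂ | μ ∈ scaledLattice c ∧ r ℓ / 2 ≤ ‖μ‖ ∧
          ‖μ‖ ≤ r ℓ}, F μ) ≤ 9 * r ℓ ^ 2 / (c:ℝ) ^ 2 * (9 * r i / r ℓ) ^ 3 := hsum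
    _ = 6561 * r i ^ 3 / ((c:ℝ) ^ 2 * r ℓ) := heq
    _ ≤ C * (1 / 2) ^ (ℓ - (i + 1)) := hfinal
  have hg0 : ∀ ℓ, 0 ≤ g ℓ := by
    intro ℓ
    simp only [hg]
    split
    · rw [finsum_mem_eq_finite_toFinset_sum F (annulus_finite c hc1 (r ℓ))]
      exact Finset.sum_nonneg fun μ _ => hF0 μ
    · exact le_refl 0
  have hgh : ∀ ℓ, g ℓ ≤ h ℓ := by
    intro ℓ
    by_cases hℓ : i + 1 ≤ ℓ
    · exact key ℓ hℓ
    · simp only [hg, hh, if_neg hℓ]; exact le_refl 0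
  -- summability of h
  have hhs : Summable h := by
    rw [← summable_nat_add_iff (i + 1)]
    have : (fun n => h (n + (i + 1))) = fun n => C * (1 / 2) ^ n := by
      funext n
      simp only [hh, if_pos (Nat.le_add_left (i+1) n), Nat.add_sub_cancel]
    rw [this]
    exact (summable_geometric_of_lt_one (by norm_num) (by norm_num)).mul_left C
  have hgs : Summable g := Summable.of_nonneg_of_le hg0 hgh hhs
  refine ⟨hgs, ?_⟩
  have hth : ∑' ℓ, h ℓ = 2 * C := by
    rw [← hhs.sum_add_tsum_nat_add (i + 1)]
    have h0 : ∑ ℓ ∈ Finset.range (i + 1), h ℓ = 0 := by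
      apply Finset.sum_eq_zero
      intro ℓ hℓ
      have hℓ' : ¬ i + 1 ≤ ℓ := by
        have := Finset.mem_range.1 hℓ; omega
      simp only [hh, if_neg hℓ']
    have h1 : (fun n => h (n + (i + 1))) = fun n => C * (1 / 2) ^ n := by
      funext n
      simp only [hh, if_pos (Nat.le_add_left (i+1) n), Nat.add_sub_cancel]
    rw [h0, h1, zero_add, tsum_mul_left, tsum_geometric_of_lt_one (by norm_num) (by norm_num)]
    norm_num
    ring
  calc ∑' ℓ, g ℓ ≤ ∑' ℓ, h ℓ := Summable.tsum_le_tsum hgh hgs hhs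
  _ = 2 * C := hth
  _ = 13122 / (c:ℝ) ^ 2 := by rw [hC]; ring
end
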